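/- arXiv:0807.2028 — 6 statements merged into one kernel-verified Lean document; each statement's English description precedes it below -/
import Mathlib

section
/- Consider n agents with opinions x_1(t),…,x_n(t) ∈ ℝ evolving according to the Krause model. If x_i(0) ≤ x_j(0) for some indices i, j, then x_i(t) ≤ x_j(t) for every time t ≥ 0. In other words, the update rule preserves the order of opinions. -/
/-- Cross comparison: if every element of `X` is (pointwise via `f`) below every
element of `Y`, then `|Y| * Σ_X f ≤ |X| * Σ_Y f`. -/
lemma krause_cross_le {α : Type*} (X Y : Finset α) (f : α → ℝ)
    (h : ∀ k ∈ X, ∀ l ∈ Y, f k ≤ f l) :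
    (Y.card : ℝ) * ∑ k ∈ X, f k ≤ (X.card : ℝ) * ∑ l ∈ Y, f l := by
  have key : ∑ k ∈ X, ∑ _l ∈ Y, f k ≤ ∑ _k ∈ X, ∑ l ∈ Y, f l :=
    Finset.sum_le_sum fun k hk => Finset.sum_le_sum fun l hl => h k hk l hl
  have h1 : ∑ k ∈ X, ∑ _l ∈ Y, f k = (Y.card : ℝ) * ∑ k ∈ X, f k := by
    simp [Finset.sum_const, nsmul_eq_mul, Finset.mul_sum]
  have h2 : ∑ _k ∈ X, ∑ l ∈ Y, f l = (X.card : ℝ) * ∑ l ∈ Y, f l := by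
    simp [Finset.sum_const, nsmul_eq_mul]
  rw [h1, h2] at key
  exact key

/-- The Krause model update preserves the order of opinions. -/
theorem krause_order_preservation (n : ℕ) (x : ℕ → Fin n → ℝ)
    (hupd : ∀ t (i : Fin n), x (t + 1) i =
      (∑ j ∈ Finset.univ.filter (fun j => |x t i - x t j| < 1), x t j) /
      ((Finset.univ.filter (fun j => |x t i - x t j| < 1)).card : ℝ))
    (i j : Fin n) (h : x 0 i ≤ x 0 j) :
    ∀ t : ℕ, x t i ≤ x t j := by
  intro t
  induction t with
  | zero => exact h
  | succ t ih =>
    rw [hupd t i, hupd t j]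
    set f : Fin n → ℝ := x t with hf
    set A : Finset (Fin n) := Finset.univ.filter (fun k => |f i - f k| < 1) with hA
    set B : Finset (Fin n) := Finset.univ.filter (fun k => |f j - f k| < 1) with hB
    have hAmem : ∀ k, k ∈ A ↔ |f i - f k| < 1 := by intro k; simp [hA]
    have hBmem : ∀ k, k ∈ B ↔ |f j - f k| < 1 := by intro k; simp [hB]
    have hiA : i ∈ A := by rw [hAmem]; simp
    have hjB : j ∈ B := by rw [hBmem]; simp
    -- every element of A is < f i + 1, every element of B is > f j - 1
    have hAub : ∀ k ∈ A, f k < f i + 1 := by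
      intro k hk
      have := (hAmem k).mp hk
      rw [abs_lt] at this
      linarith [this.1]
    have hBlb : ∀ l ∈ B, f j - 1 < f l := by
      intro l hl
      have := (hBmem l).mp hl
      rw [abs_lt] at this
      linarith [this.2]
    -- elements of A \ B are ≤ f j - 1
    have hP : ∀ k ∈ A \ B, f k ≤ f j - 1 := by
      intro k hk
      rw [Finset.mem_sdiff] at hk
      have h1 := (hAmem k).mp hk.1
      have h2 : 1 ≤ |f j - f k| := not_lt.mp (fun c => hk.2 ((hBmem k).mpr c))
      rw [abs_lt] at h1
      rcases le_abs.mp h2 with h2' | h2'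
      · linarith
      · exfalso; linarith [h1.1]
    -- elements of B \ A are ≥ f i + 1
    have hQ : ∀ l ∈ B \ A, f i + 1 ≤ f l := by
      intro l hl
      rw [Finset.mem_sdiff] at hl
      have h1 := (hBmem l).mp hl.1
      have h2 : 1 ≤ |f i - f l| := not_lt.mp (fun c => hl.2 ((hAmem l).mpr c))
      rw [abs_lt] at h1
      rcases le_abs.mp h2 with h2' | h2'
      · exfalso; linarith [h1.2]
      · linarith
    -- cross inequalities
    have c1 : ((A ∩ B).card : ℝ) * ∑ k ∈ A \ B, f k
        ≤ ((A \ B).card : ℝ) * ∑ l ∈ A ∩ B, f l := by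
      apply krause_cross_le
      intro k hk l hl
      have hlB : l ∈ B := (Finset.mem_inter.mp hl).2
      linarith [hP k hk, hBlb l hlB]
    have c2 : ((B \ A).card : ℝ) * ∑ k ∈ A \ B, f k
        ≤ ((A \ B).card : ℝ) * ∑ l ∈ B \ A, f l := by
      apply krause_cross_le
      intro k hk l hl
      linarith [hP k hk, hBlb l (Finset.mem_sdiff.mp hl).1]
    have c3 : ((B \ A).card : ℝ) * ∑ k ∈ A ∩ B, f k
        ≤ ((A ∩ B).card : ℝ) * ∑ l ∈ B \ A, f l := by
      apply krause_cross_le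
      intro k hk l hl
      have hkA : k ∈ A := (Finset.mem_inter.mp hk).1
      linarith [hAub k hkA, hQ l hl]
    -- decompositions
    have sumA : ∑ k ∈ A ∩ B, f k + ∑ k ∈ A \ B, f k = ∑ k ∈ A, f k :=
      Finset.sum_inter_add_sum_sdiff A B f
    have sumB : ∑ k ∈ B ∩ A, f k + ∑ k ∈ B \ A, f k = ∑ k ∈ B, f k :=
      Finset.sum_inter_add_sum_sdiff B A f
    rw [Finset.inter_comm] at sumB
    have cardA : ((A ∩ B).card : ℝ) + ((A \ B).card : ℝ) = (A.card : ℝ) := by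
      rw [← Nat.cast_add, Finset.card_inter_add_card_sdiff]
    have cardB : ((A ∩ B).card : ℝ) + ((B \ A).card : ℝ) = (B.card : ℝ) := by
      rw [← Nat.cast_add, Finset.inter_comm, Finset.card_inter_add_card_sdiff]
    have hApos : (0 : ℝ) < A.card := by
      exact_mod_cast Finset.card_pos.mpr ⟨i, hiA⟩
    have hBpos : (0 : ℝ) < B.card := by
      exact_mod_cast Finset.card_pos.mpr ⟨j, hjB⟩
    rw [div_le_div_iff₀ hApos hBpos, ← sumA, ← sumB, ← cardA, ← cardB]
    nlinarith [c1, c2, c3]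
end

section
/- Consider n agents with opinions x_1(t),…,x_n(t) ∈ ℝ evolving according to the Krause model, with sorted initial opinions (x_i(0) ≤ x_j(0) whenever i < j). If at some time t the gap between two consecutive opinions satisfies x_{i+1}(t) − x_i(t) ≥ 1, then x_{i+1}(t') − x_i(t') ≥ 1 for all t' ≥ t; moreover the opinions x_1(t'),…,x_i(t') for t' ≥ t evolve exactly as an independent Krause system of i agents started from x_1(t),…,x_i(t), and likewise x_{i+1}(t'),…,x_n(t') evolve as an independent Krause system of n−i agents. -/
open Finset

section KrauseAux

variable {n : ℕ}

/-- neighbor set -/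
private noncomputable def Nbr (y : Fin n → ℝ) (k : Fin n) : Finset (Fin n) :=
  Finset.univ.filter (fun j => |y k - y j| < 1)

private lemma mem_Nbr {y : Fin n → ℝ} {k j : Fin n} :
    j ∈ Nbr y k ↔ |y k - y j| < 1 := by simp [Nbr]

private lemma self_mem_Nbr (y : Fin n → ℝ) (k : Fin n) : k ∈ Nbr y k := by
  simp [Nbr]

private lemma Nbr_card_pos (y : Fin n → ℝ) (k : Fin n) : 0 < (Nbr y k).card :=
  Finset.card_pos.mpr ⟨k, self_mem_Nbr y k⟩

private lemma cross {ι : Type*} (S T : Finset ι) (f : ι → ℝ)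
    (h : ∀ a ∈ S, ∀ b ∈ T, f a ≤ f b) :
    (T.card : ℝ) * ∑ x ∈ S, f x ≤ (S.card : ℝ) * ∑ x ∈ T, f x := by
  have h1 : ∑ a ∈ S, ∑ _b ∈ T, f a ≤ ∑ _a ∈ S, ∑ b ∈ T, f b := by
    refine Finset.sum_le_sum fun a ha => Finset.sum_le_sum fun b hb => h a ha b hb
  have e1 : ∑ a ∈ S, ∑ _b ∈ T, f a = (T.card : ℝ) * ∑ x ∈ S, f x := by
    simp [Finset.sum_const, nsmul_eq_mul, Finset.mul_sum]
  have e2 : ∑ _a ∈ S, ∑ b ∈ T, f b = (S.card : ℝ) * ∑ x ∈ T, f x := by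
    simp [Finset.sum_const, nsmul_eq_mul]
  rw [e1, e2] at h1
  exact h1

private lemma avg_union_le {ι : Type*} [DecidableEq ι] (A B C : Finset ι) (f : ι → ℝ)
    (hAB : Disjoint A B) (hBC : Disjoint B C)
    (hne1 : (A ∪ B).Nonempty) (hne2 : (B ∪ C).Nonempty)
    (h1 : ∀ a ∈ A, ∀ b ∈ B, f a ≤ f b)
    (h2 : ∀ b ∈ B, ∀ c ∈ C, f b ≤ f c)
    (h3 : ∀ a ∈ A, ∀ c ∈ C, f a ≤ f c) :
    (∑ x ∈ A ∪ B, f x) / ((A ∪ B).card : ℝ) ≤ (∑ x ∈ B ∪ C, f x) / ((B ∪ C).card : ℝ) := by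
  have c1 := cross A B f h1
  have c2 := cross B C f h2
  have c3 := cross A C f h3
  have p1 : (0 : ℝ) < ((A ∪ B).card : ℝ) := by exact_mod_cast Finset.card_pos.mpr hne1
  have p2 : (0 : ℝ) < ((B ∪ C).card : ℝ) := by exact_mod_cast Finset.card_pos.mpr hne2
  rw [div_le_div_iff₀ p1 p2]
  rw [Finset.sum_union hAB, Finset.sum_union hBC,
    Finset.card_union_of_disjoint hAB, Finset.card_union_of_disjoint hBC] at *
  push_cast at *
  nlinarith [c1, c2, c3]

private lemma claim1 {p q u v : ℝ} (hpq : p ≤ q) (h1 : |p - u| < 1)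
    (h2 : ¬ |q - u| < 1) (h3 : |q - v| < 1) : u ≤ v := by
  rw [abs_sub_lt_iff] at h1 h3
  rw [not_lt, le_abs] at h2
  rcases h2 with h | h <;> linarith

private lemma claim2 {p q u v : ℝ} (hpq : p ≤ q) (h1 : |p - u| < 1)
    (h2 : |q - v| < 1) (h3 : ¬ |p - v| < 1) : u ≤ v := by
  rw [abs_sub_lt_iff] at h1 h2
  rw [not_lt, le_abs] at h3
  rcases h3 with h | h <;> linarith

/-- one Krause step preserves monotonicity -/
private lemma mono_step (y y' : Fin n → ℝ) (hy : Monotone y)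
    (hupd : ∀ k, y' k = (∑ j ∈ Nbr y k, y j) / ((Nbr y k).card : ℝ)) :
    Monotone y' := by
  intro a b hab
  have hab' : y a ≤ y b := hy hab
  rw [hupd a, hupd b]
  have eA : Nbr y a = (Nbr y a \ Nbr y b) ∪ (Nbr y a ∩ Nbr y b) := by
    ext j; simp only [Finset.mem_union, Finset.mem_sdiff, Finset.mem_inter]; tauto
  have eC : Nbr y b = (Nbr y a ∩ Nbr y b) ∪ (Nbr y b \ Nbr y a) := by
    ext j; simp only [Finset.mem_union, Finset.mem_sdiff, Finset.mem_inter]; tauto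
  have hne1 : ((Nbr y a \ Nbr y b) ∪ (Nbr y a ∩ Nbr y b)).Nonempty := by
    rw [← eA]; exact ⟨a, self_mem_Nbr y a⟩
  have hne2 : ((Nbr y a ∩ Nbr y b) ∪ (Nbr y b \ Nbr y a)).Nonempty := by
    rw [← eC]; exact ⟨b, self_mem_Nbr y b⟩
  have hd1 : Disjoint (Nbr y a \ Nbr y b) (Nbr y a ∩ Nbr y b) := by
    rw [Finset.disjoint_left]
    intro j hj hj'
    exact (Finset.mem_sdiff.mp hj).2 (Finset.mem_inter.mp hj').2
  have hd2 : Disjoint (Nbr y a ∩ Nbr y b) (Nbr y b \ Nbr y a) := by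
    rw [Finset.disjoint_left]
    intro j hj hj'
    exact (Finset.mem_sdiff.mp hj').2 (Finset.mem_inter.mp hj).1
  have key := avg_union_le (Nbr y a \ Nbr y b) (Nbr y a ∩ Nbr y b) (Nbr y b \ Nbr y a) y
    hd1 hd2 hne1 hne2 ?_ ?_ ?_
  · rwa [← eA, ← eC] at key
  · intro u hu w hw
    rw [Finset.mem_sdiff] at hu; rw [Finset.mem_inter] at hw
    exact claim1 hab' (mem_Nbr.mp hu.1) (fun h => hu.2 (mem_Nbr.mpr h)) (mem_Nbr.mp hw.2)
  · intro u hu w hw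
    rw [Finset.mem_inter] at hu; rw [Finset.mem_sdiff] at hw
    exact claim2 hab' (mem_Nbr.mp hu.1) (mem_Nbr.mp hw.1) (fun h => hw.2 (mem_Nbr.mpr h))
  · intro u hu w hw
    rw [Finset.mem_sdiff] at hu hw
    exact claim1 hab' (mem_Nbr.mp hu.1) (fun h => hu.2 (mem_Nbr.mpr h)) (mem_Nbr.mp hw.1)

private lemma avg_le (S : Finset (Fin n)) (f : Fin n → ℝ) (m : ℝ)
    (hS : 0 < S.card) (h : ∀ j ∈ S, f j ≤ m) :
    (∑ j ∈ S, f j) / (S.card : ℝ) ≤ m := by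
  rw [div_le_iff₀ (by exact_mod_cast hS)]
  calc ∑ j ∈ S, f j ≤ S.card • m := Finset.sum_le_card_nsmul S f m h
    _ = m * S.card := by rw [nsmul_eq_mul, mul_comm]

private lemma le_avg (S : Finset (Fin n)) (f : Fin n → ℝ) (m : ℝ)
    (hS : 0 < S.card) (h : ∀ j ∈ S, m ≤ f j) :
    m ≤ (∑ j ∈ S, f j) / (S.card : ℝ) := by
  rw [le_div_iff₀ (by exact_mod_cast hS)]
  calc m * S.card = S.card • m := by rw [nsmul_eq_mul, mul_comm]
    _ ≤ ∑ j ∈ S, f j := Finset.card_nsmul_le_sum S f m h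

/-- with monotone opinions and a gap ≥ 1, neighbor sets decouple -/
private lemma nbr_split (y : Fin n → ℝ) (hmono : Monotone y) (i : ℕ) (hi : i + 1 < n)
    (hgap : 1 ≤ y ⟨i + 1, hi⟩ - y ⟨i, Nat.lt_of_succ_lt hi⟩) :
    (∀ k : Fin n, (k : ℕ) ≤ i →
      Nbr y k = Finset.univ.filter (fun j : Fin n => (j : ℕ) ≤ i ∧ |y k - y j| < 1)) ∧
    (∀ k : Fin n, i < (k : ℕ) →
      Nbr y k = Finset.univ.filter (fun j : Fin n => i < (j : ℕ) ∧ |y k - y j| < 1)) := by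
  constructor
  · intro k hk
    ext j
    simp only [Nbr, Finset.mem_filter, Finset.mem_univ, true_and]
    constructor
    · intro hj
      refine ⟨?_, hj⟩
      by_contra hji
      push_neg at hji
      have h1 : y ⟨i + 1, hi⟩ ≤ y j := hmono (by simp [Fin.le_def]; omega)
      have h2 : y k ≤ y ⟨i, Nat.lt_of_succ_lt hi⟩ := hmono (by simp [Fin.le_def]; omega)
      rw [abs_sub_lt_iff] at hj
      linarith
    · exact And.right
  · intro k hk
    ext j
    simp only [Nbr, Finset.mem_filter, Finset.mem_univ, true_and]
    constructor
    · intro hj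
      refine ⟨?_, hj⟩
      by_contra hji
      push_neg at hji
      have h1 : y j ≤ y ⟨i, Nat.lt_of_succ_lt hi⟩ := hmono (by simp [Fin.le_def]; omega)
      have h2 : y ⟨i + 1, hi⟩ ≤ y k := hmono (by simp [Fin.le_def]; omega)
      rw [abs_sub_lt_iff] at hj
      linarith
    · exact And.right

/-- gap persists one step -/
private lemma gap_step (y y' : Fin n → ℝ) (hmono : Monotone y)
    (hupd : ∀ k, y' k = (∑ j ∈ Nbr y k, y j) / ((Nbr y k).card : ℝ))
    (i : ℕ) (hi : i + 1 < n)
    (hgap : 1 ≤ y ⟨i + 1, hi⟩ - y ⟨i, Nat.lt_of_succ_lt hi⟩) :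
    1 ≤ y' ⟨i + 1, hi⟩ - y' ⟨i, Nat.lt_of_succ_lt hi⟩ := by
  have hlow : y' ⟨i, Nat.lt_of_succ_lt hi⟩ ≤ y ⟨i, Nat.lt_of_succ_lt hi⟩ := by
    rw [hupd]
    apply avg_le _ _ _ (Nbr_card_pos y _)
    intro j hj
    rw [mem_Nbr] at hj
    rcases le_or_gt (j : ℕ) i with h | h
    · exact hmono (by simp [Fin.le_def]; omega)
    · exfalso
      have h1 : y ⟨i + 1, hi⟩ ≤ y j := hmono (by simp [Fin.le_def]; omega)
      rw [abs_sub_lt_iff] at hj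
      linarith
  have hhigh : y ⟨i + 1, hi⟩ ≤ y' ⟨i + 1, hi⟩ := by
    rw [hupd]
    apply le_avg _ _ _ (Nbr_card_pos y _)
    intro j hj
    rw [mem_Nbr] at hj
    rcases le_or_gt (j : ℕ) i with h | h
    · exfalso
      have h1 : y j ≤ y ⟨i, Nat.lt_of_succ_lt hi⟩ := hmono (by simp [Fin.le_def]; omega)
      rw [abs_sub_lt_iff] at hj
      linarith
    · exact hmono (by simp [Fin.le_def]; omega)
  linarith

end KrauseAux

/-- In the Krause model with sorted initial opinions, a gap of at
least 1 between consecutive opinions persists forever, and from that time on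
the lower group of agents and the upper group of agents each evolve exactly as
independent Krause systems (their updates only involve agents of their own
group). -/
theorem krause_gap_splits_system (n : ℕ) (x : ℕ → Fin n → ℝ)
    (hupd : ∀ t (i : Fin n), x (t + 1) i =
      (∑ j ∈ Finset.univ.filter (fun j => |x t i - x t j| < 1), x t j) /
      ((Finset.univ.filter (fun j => |x t i - x t j| < 1)).card : ℝ))
    (hsorted : ∀ i j : Fin n, i < j → x 0 i ≤ x 0 j)
    (t : ℕ) (i : ℕ) (hi : i + 1 < n)
    (hgap : 1 ≤ x t ⟨i + 1, hi⟩ - x t ⟨i, Nat.lt_of_succ_lt hi⟩) :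
    (∀ t' ≥ t, 1 ≤ x t' ⟨i + 1, hi⟩ - x t' ⟨i, Nat.lt_of_succ_lt hi⟩) ∧
    (∀ s : ℕ, ∀ k : Fin n, (k : ℕ) ≤ i →
      x (t + s + 1) k =
        (∑ j ∈ Finset.univ.filter
            (fun j : Fin n => (j : ℕ) ≤ i ∧ |x (t + s) k - x (t + s) j| < 1),
          x (t + s) j) /
        ((Finset.univ.filter
            (fun j : Fin n => (j : ℕ) ≤ i ∧ |x (t + s) k - x (t + s) j| < 1)).card : ℝ)) ∧
    (∀ s : ℕ, ∀ k : Fin n, i < (k : ℕ) →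
      x (t + s + 1) k =
        (∑ j ∈ Finset.univ.filter
            (fun j : Fin n => i < (j : ℕ) ∧ |x (t + s) k - x (t + s) j| < 1),
          x (t + s) j) /
        ((Finset.univ.filter
            (fun j : Fin n => i < (j : ℕ) ∧ |x (t + s) k - x (t + s) j| < 1)).card : ℝ)) := by
  have hupd' : ∀ T (k : Fin n),
      x (T + 1) k = (∑ j ∈ Nbr (x T) k, x T j) / ((Nbr (x T) k).card : ℝ) := by
    intro T k
    simpa [Nbr] using hupd T k
  have hmonoAll : ∀ T, Monotone (x T) := by
    intro T
    induction T with
    | zero =>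
      intro a b hab
      rcases eq_or_lt_of_le hab with rfl | h
      · exact le_refl _
      · exact hsorted a b h
    | succ T ih => exact mono_step (x T) (x (T + 1)) ih (hupd' T)
  have hgapAll : ∀ s, 1 ≤ x (t + s) ⟨i + 1, hi⟩ - x (t + s) ⟨i, Nat.lt_of_succ_lt hi⟩ := by
    intro s
    induction s with
    | zero => simpa using hgap
    | succ s ih =>
      exact gap_step (x (t + s)) (x (t + s + 1)) (hmonoAll (t + s)) (hupd' (t + s)) i hi ih
  refine ⟨?_, ?_, ?_⟩
  · intro t' ht'
    obtain ⟨s, rfl⟩ := Nat.exists_eq_add_of_le ht'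
    exact hgapAll s
  · intro s k hk
    have hK := (nbr_split (x (t + s)) (hmonoAll (t + s)) i hi (hgapAll s)).1 k hk
    rw [hupd' (t + s) k, hK]
  · intro s k hk
    have hK := (nbr_split (x (t + s)) (hmonoAll (t + s)) i hi (hgapAll s)).2 k hk
    rw [hupd' (t + s) k, hK]
end

section
/- Consider n agents with opinions x_1(t),…,x_n(t) ∈ ℝ evolving according to the Krause model. Then the opinions converge in finite time: there exist x_1*,…,x_n* ∈ ℝ and a time T such that x_i(t) = x_i* for all i and all t ≥ T. Moreover, for any pair i, j, either x_i* = x_j* or |x_i* − x_j*| ≥ 1. -/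
/-!
Opinions keep their order, so the lowest agent stays lowest, and opinions stay below their
initial maximum. The number of distinct opinions never increases, so after some time no two
distinct opinions merge any more. From then on, while some agent lies strictly within distance 1
above the bottom cluster, the bottom cluster and the next opinion are at least `1 / N²` apart
after one step, and the bottom opinion then rises by at least `1 / N³`; being bounded, this
cannot go on forever. So the bottom cluster eventually detaches at distance `≥ 1` from all other
agents: it is frozen from then on, and the others evolve as a Krause system with fewer agents.
At a fixed point, the lowest agent with a neighbour at a different opinion would move up, so
distinct limit opinions are at least 1 apart.
-/

open Finset
open scoped BigOperators

section Average

variable {α K : Type*} [Field K] [LinearOrder K] [IsStrictOrderedRing K]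

lemma Finset.expect_le_expect_union [DecidableEq α] {s t : Finset α} {f : α → K}
    (hs : s.Nonempty) (hst : ∀ a ∈ s, ∀ b ∈ t, f a ≤ f b) :
    𝔼 i ∈ s, f i ≤ 𝔼 i ∈ s ∪ t, f i := by
  set m := 𝔼 i ∈ s, f i with hm_def
  have hm : ∀ b ∈ t \ s, m ≤ f b := fun b hb =>
    expect_le hs fun a ha => hst a ha b (mem_sdiff.1 hb).1
  have hsum_s : ∑ i ∈ s, f i = #s * m := by
    rw [hm_def, expect_eq_sum_div_card, mul_div_cancel₀]
    exact_mod_cast hs.card_pos.ne'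
  have hsum_t := card_nsmul_le_sum (t \ s) f m hm
  rw [nsmul_eq_mul] at hsum_t
  rw [← union_sdiff_self_eq_union, expect_eq_sum_div_card,
    le_div_iff₀ (by exact_mod_cast (hs.mono subset_union_left).card_pos),
    sum_union disjoint_sdiff, card_union_of_disjoint disjoint_sdiff, hsum_s]
  push_cast
  linarith

lemma Finset.expect_union_le_expect [DecidableEq α] {s t : Finset α} {f : α → K}
    (ht : t.Nonempty) (hst : ∀ a ∈ s, ∀ b ∈ t, f a ≤ f b) :
    𝔼 i ∈ s ∪ t, f i ≤ 𝔼 i ∈ t, f i := by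
  have := expect_le_expect_union (f := fun i => -f i) ht
    fun b hb a ha => neg_le_neg (hst a ha b hb)
  rwa [expect_neg_distrib, expect_neg_distrib, neg_le_neg_iff, union_comm] at this

lemma not_bddAbove_range_of_add_le_succ [Archimedean K] {u : ℕ → K} {c : K} (hc : 0 < c)
    (hu : ∀ n, u n + c ≤ u (n + 1)) : ¬BddAbove (Set.range u) := by
  rintro ⟨M, hM⟩
  have hlin : ∀ n : ℕ, u 0 + n * c ≤ u n := by
    intro n
    induction n with
    | zero => simp
    | succ n ih => push_cast; linarith [hu n]
  obtain ⟨n, hn⟩ := exists_nat_gt ((M - u 0) / c)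
  rw [div_lt_iff₀ hc] at hn
  linarith [hM ⟨n, rfl⟩, hlin n]

end Average

namespace Krause

variable {ι : Type*}

noncomputable def nbhd (S : Finset ι) (y : ι → ℝ) (v : ℝ) : Finset ι :=
  {j ∈ S | |v - y j| < 1}

/-- The next opinion of an agent of `S` whose current opinion is `v`: it depends on the agent
only through `v`. -/
noncomputable def update (S : Finset ι) (y : ι → ℝ) (v : ℝ) : ℝ :=
  𝔼 j ∈ nbhd S y v, y j

def IsTrajectory (S : Finset ι) (x : ℕ → ι → ℝ) : Prop :=
  ∀ t, ∀ i ∈ S, x (t + 1) i = update S (x t) (x t i)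

section Update

variable {S : Finset ι} {y : ι → ℝ}

lemma mem_nbhd {v : ℝ} {j : ι} : j ∈ nbhd S y v ↔ j ∈ S ∧ |v - y j| < 1 := mem_filter

lemma self_mem_nbhd {i : ι} (hi : i ∈ S) : i ∈ nbhd S y (y i) :=
  mem_nbhd.2 ⟨hi, by simp⟩

lemma update_mono {v w : ℝ} (hv : (nbhd S y v).Nonempty) (hw : (nbhd S y w).Nonempty)
    (hvw : v ≤ w) : update S y v ≤ update S y w := by
  classical
  set A := nbhd S y v
  set B := nbhd S y w
  have hAB : ∀ a ∈ A \ B, ∀ b ∈ B, y a ≤ y b := by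
    simp only [A, B, mem_sdiff, mem_nbhd, abs_lt, not_and, not_lt]
    grind
  have hBA : ∀ a ∈ A, ∀ b ∈ B \ A, y a ≤ y b := by
    simp only [A, B, mem_sdiff, mem_nbhd, abs_lt, not_and, not_lt]
    grind
  calc update S y v ≤ 𝔼 j ∈ A ∪ B \ A, y j := expect_le_expect_union hv hBA
    _ = 𝔼 j ∈ A \ B ∪ B, y j := by rw [union_sdiff_self_eq_union, sdiff_union_self_eq_union]
    _ ≤ update S y w := expect_union_le_expect hw hAB

lemma update_of_detached {a : ℝ} (h : ∀ j ∈ S, y j = a ∨ a + 1 ≤ y j) {i : ι} (hi : i ∈ S) :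
    (y i = a → update S y (y i) = a) ∧ (a + 1 ≤ y i → a + 1 ≤ update S y (y i)) := by
  have hne : (nbhd S y (y i)).Nonempty := ⟨i, self_mem_nbhd hi⟩
  refine ⟨fun hia => ?_, fun hia => le_expect hne fun k hk => ?_⟩
  · rw [update, expect_congr rfl (g := fun _ => a), expect_const hne]
    intro k hk
    obtain ⟨hkS, hik⟩ := mem_nbhd.1 hk
    rw [abs_lt] at hik
    exact (h k hkS).resolve_right (by linarith)
  · obtain ⟨hkS, hik⟩ := mem_nbhd.1 hk
    rw [abs_lt] at hik
    exact (h k hkS).resolve_left (by linarith)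

lemma add_div_card_le_update {i₀ : ι} (hmin : ∀ k ∈ S, y i₀ ≤ y k) {δ : ℝ} (hδ : 0 ≤ δ)
    {j : ι} (hj : j ∈ S) (hj₁ : y i₀ + δ ≤ y j) (hj₂ : y j < y i₀ + 1) :
    y i₀ + δ / #S ≤ update S y (y i₀) := by
  set A := nbhd S y (y i₀)
  have hjA : j ∈ A := mem_nbhd.2 ⟨hj, abs_lt.2 ⟨by linarith, by linarith [hmin j hj]⟩⟩
  have hA : (0 : ℝ) < #A := by exact_mod_cast card_pos.2 ⟨j, hjA⟩
  have hAS : (#A : ℝ) ≤ #S := by exact_mod_cast card_le_card (filter_subset _ S)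
  have hsum : y j - y i₀ ≤ ∑ k ∈ A, (y k - y i₀) :=
    single_le_sum (f := fun k => y k - y i₀)
      (fun k hk => sub_nonneg.2 (hmin k (mem_nbhd.1 hk).1)) hjA
  rw [sum_sub_distrib, sum_const, nsmul_eq_mul] at hsum
  calc y i₀ + δ / #S ≤ y i₀ + δ / #A := by gcongr
    _ ≤ update S y (y i₀) := by
      rw [update, expect_eq_sum_div_card, le_div_iff₀ hA, add_mul, div_mul_cancel₀ _ hA.ne']
      linarith

/-- The neighbourhood `A` of the minimum `i₀` is contained in that of `j`. If they differ, `j`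
also sees agents at opinion `≥ y i₀ + 1`, while the agents of `A` are below `y i₀ + 1`, strictly
so for `i₀`; this pulls the average of `j` at least `1 / (#A * (#A + #(B \ A)))` above that of
`i₀`. -/
lemma update_eq_or_add_le_update {i₀ j : ι} (hi₀ : i₀ ∈ S) (hmin : ∀ k ∈ S, y i₀ ≤ y k)
    (hj : j ∈ S) (hj₁ : y j < y i₀ + 1) :
    update S y (y j) = update S y (y i₀) ∨
      update S y (y i₀) + 1 / (#S : ℝ) ^ 2 ≤ update S y (y j) := by
  classical
  set A := nbhd S y (y i₀)
  set B := nbhd S y (y j)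
  have hAB : A ⊆ B := fun k hk => by
    obtain ⟨hkS, hk⟩ := mem_nbhd.1 hk
    rw [abs_lt] at hk
    exact mem_nbhd.2 ⟨hkS, abs_lt.2 ⟨by linarith [hmin j hj], by linarith [hmin k hkS]⟩⟩
  rcases (B \ A).eq_empty_or_nonempty with hE | hE
  · left
    change 𝔼 k ∈ B, y k = 𝔼 k ∈ A, y k
    rw [show B = A from (sdiff_eq_empty_iff_subset.1 hE).antisymm hAB]
  right
  have hi₀A : i₀ ∈ A := self_mem_nbhd hi₀
  have hfar : ∀ k ∈ B \ A, y i₀ + 1 ≤ y k := fun k hk => by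
    obtain ⟨hkB, hkA⟩ := mem_sdiff.1 hk
    have hkS := (mem_nbhd.1 hkB).1
    rw [mem_nbhd, abs_lt] at hkA
    by_contra! h
    exact hkA ⟨hkS, by linarith, by linarith [hmin k hkS]⟩
  have hnear : ∀ k ∈ A, 0 ≤ y i₀ + 1 - y k := fun k hk => by
    linarith [(abs_lt.1 (mem_nbhd.1 hk).2).1]
  have hP : 1 ≤ #A * (y i₀ + 1) - ∑ k ∈ A, y k := by
    have := single_le_sum hnear hi₀A
    rw [sum_sub_distrib, sum_const, nsmul_eq_mul] at this
    linarith
  have hQ : #(B \ A) * (y i₀ + 1) ≤ ∑ k ∈ B \ A, y k := by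
    have := card_nsmul_le_sum _ _ _ hfar
    rwa [nsmul_eq_mul] at this
  have ha : (1 : ℝ) ≤ #A := by exact_mod_cast card_pos.2 ⟨i₀, hi₀A⟩
  have he : (1 : ℝ) ≤ #(B \ A) := by exact_mod_cast card_pos.2 hE
  have hBS : (#A : ℝ) + #(B \ A) ≤ #S := by
    rw [add_comm]
    exact_mod_cast (card_sdiff_add_card_eq_card hAB).trans_le (card_le_card (filter_subset _ S))
  rw [update, update, expect_eq_sum_div_card, expect_eq_sum_div_card, ← sum_sdiff hAB,
    ← card_sdiff_add_card_eq_card hAB, Nat.cast_add]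
  generalize ∑ k ∈ A, y k = P at *
  generalize ∑ k ∈ B \ A, y k = Q at *
  generalize (#A : ℝ) = a at *
  generalize (#(B \ A) : ℝ) = e at *
  generalize (#S : ℝ) = N at *
  have hkey : 1 ≤ a * Q - e * P := by nlinarith
  calc P / a + 1 / N ^ 2 ≤ P / a + 1 / (a * (e + a)) := by
        gcongr
        nlinarith
    _ ≤ P / a + (a * Q - e * P) / (a * (e + a)) := by gcongr
    _ = (Q + P) / (e + a) := by field_simp; ring

lemma eq_or_one_le_abs_sub_of_update_eq (hfix : ∀ i ∈ S, update S y (y i) = y i) :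
    ∀ i ∈ S, ∀ j ∈ S, y i = y j ∨ 1 ≤ |y i - y j| := by
  by_contra! h
  obtain ⟨i, hi, j, hj, hne, hlt⟩ := h
  -- The lowest agent with a neighbour at a different opinion has all its neighbours above it.
  set W := {i ∈ S | ∃ j ∈ S, y i ≠ y j ∧ |y i - y j| < 1}
  obtain ⟨i₁, hi₁W, hi₁⟩ := W.exists_min_image y ⟨i, mem_filter.2 ⟨hi, j, hj, hne, hlt⟩⟩
  obtain ⟨hi₁S, j₁, hj₁, hne₁, hlt₁⟩ := mem_filter.1 hi₁W
  have habove : ∀ k ∈ nbhd S y (y i₁), y i₁ ≤ y k := fun k hk => by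
    obtain ⟨hkS, hk⟩ := mem_nbhd.1 hk
    by_contra! hki
    exact (hi₁ k (mem_filter.2 ⟨hkS, i₁, hi₁S, hki.ne, by rwa [abs_sub_comm]⟩)).not_gt hki
  have hj₁N : j₁ ∈ nbhd S y (y i₁) := mem_nbhd.2 ⟨hj₁, hlt₁⟩
  exact (lt_expect habove ⟨j₁, hj₁N, (habove j₁ hj₁N).lt_of_ne hne₁⟩).ne' (hfix i₁ hi₁S)

end Update

namespace IsTrajectory

variable {S : Finset ι} {x : ℕ → ι → ℝ}

lemma shift (hx : IsTrajectory S x) (t : ℕ) : IsTrajectory S (fun s => x (t + s)) :=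
  fun s i hi => hx (t + s) i hi

lemma le_succ_of_le (hx : IsTrajectory S x) {t : ℕ} {i j : ι} (hi : i ∈ S) (hj : j ∈ S)
    (h : x t i ≤ x t j) : x (t + 1) i ≤ x (t + 1) j := by
  rw [hx t i hi, hx t j hj]
  exact update_mono ⟨i, self_mem_nbhd hi⟩ ⟨j, self_mem_nbhd hj⟩ h

lemma min_persists (hx : IsTrajectory S x) {i₀ : ι} (hi₀ : i₀ ∈ S)
    (h₀ : ∀ k ∈ S, x 0 i₀ ≤ x 0 k) : ∀ t, ∀ k ∈ S, x t i₀ ≤ x t k := by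
  intro t
  induction t with
  | zero => exact h₀
  | succ t ih => exact fun k hk => hx.le_succ_of_le hi₀ hk (ih k hk)

lemma exists_upper_bound (hx : IsTrajectory S x) : ∃ M, ∀ t, ∀ k ∈ S, x t k ≤ M := by
  obtain ⟨M, hM⟩ := (S.image (x 0)).bddAbove
  refine ⟨M, fun t => ?_⟩
  induction t with
  | zero => exact fun k hk => hM (mem_coe.2 (mem_image_of_mem _ hk))
  | succ t ih =>
    intro k hk
    rw [hx t k hk]
    exact expect_le ⟨k, self_mem_nbhd hk⟩ fun j hj => ih j (mem_nbhd.1 hj).1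

lemma image_succ (hx : IsTrajectory S x) (t : ℕ) :
    S.image (x (t + 1)) = (S.image (x t)).image (update S (x t)) := by
  rw [image_image]
  exact image_congr fun i hi => hx t i hi

lemma eventually_injOn (hx : IsTrajectory S x) :
    ∃ t₀, ∀ t ≥ t₀, ∀ i ∈ S, ∀ j ∈ S, x (t + 1) i = x (t + 1) j → x t i = x t j := by
  set f : ℕ → ℕ := fun t => #(S.image (x t))
  have hle : ∀ t, f (t + 1) ≤ f t := fun t => by
    simp only [f, hx.image_succ t]
    exact card_image_le
  refine ⟨Function.argmin f, fun t ht i hi j hj hij => ?_⟩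
  have hcard : f (t + 1) = f t :=
    (hle t).antisymm ((antitone_nat_of_succ_le hle ht).trans (Function.argmin_le f _))
  simp only [f, hx.image_succ t, card_image_iff] at hcard
  exact hcard (mem_image_of_mem _ hi) (mem_image_of_mem _ hj)
    (by rwa [← hx t i hi, ← hx t j hj])

lemma detached_persists (hx : IsTrajectory S x) {a : ℝ}
    (h : ∀ j ∈ S, x 0 j = a ∨ a + 1 ≤ x 0 j) (t : ℕ) :
    ∀ j ∈ S, (x 0 j = a → x t j = a) ∧ (a + 1 ≤ x 0 j → a + 1 ≤ x t j) := by
  induction t with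
  | zero => exact fun _ _ => ⟨id, id⟩
  | succ t ih =>
    have ht : ∀ j ∈ S, x t j = a ∨ a + 1 ≤ x t j := fun j hj =>
      (h j hj).imp (ih j hj).1 (ih j hj).2
    intro j hj
    rw [hx t j hj]
    exact ⟨fun h₀ => (update_of_detached ht hj).1 ((ih j hj).1 h₀),
      fun h₀ => (update_of_detached ht hj).2 ((ih j hj).2 h₀)⟩

lemma filter_of_detached (hx : IsTrajectory S x) {a : ℝ}
    (h : ∀ j ∈ S, x 0 j = a ∨ a + 1 ≤ x 0 j) : IsTrajectory {j ∈ S | a + 1 ≤ x 0 j} x := by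
  intro t i hi
  obtain ⟨hiS, hia⟩ := mem_filter.1 hi
  have hpers := hx.detached_persists h t
  have hnbhd : nbhd {j ∈ S | a + 1 ≤ x 0 j} (x t) (x t i) = nbhd S (x t) (x t i) := by
    ext k
    simp only [mem_nbhd, mem_filter, and_assoc, and_congr_right_iff]
    intro hkS
    refine ⟨And.right, fun hik => ⟨(h k hkS).resolve_left fun hka => ?_, hik⟩⟩
    have := (hpers i hiS).2 hia
    rw [(hpers k hkS).1 hka, abs_lt] at hik
    linarith
  rw [hx t i hiS, update, update, hnbhd]

lemma bottom_gap (hx : IsTrajectory S x) {t : ℕ} {i₀ j : ι} (hi₀ : i₀ ∈ S)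
    (hmin : ∀ k ∈ S, x t i₀ ≤ x t k)
    (hinj : ∀ i ∈ S, ∀ j ∈ S, x (t + 1) i = x (t + 1) j → x t i = x t j)
    (hj : j ∈ S) (hj₀ : x t j ≠ x t i₀) (hj₁ : x t j < x t i₀ + 1) :
    ∀ k ∈ S, x (t + 1) k = x (t + 1) i₀ ∨ x (t + 1) i₀ + 1 / (#S : ℝ) ^ 2 ≤ x (t + 1) k := by
  obtain ⟨j₁, hj₁W, hlow⟩ :=
    {k ∈ S | x t k ≠ x t i₀}.exists_min_image (x t) ⟨j, mem_filter.2 ⟨hj, hj₀⟩⟩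
  obtain ⟨hj₁S, hj₁₀⟩ := mem_filter.1 hj₁W
  have hgap : x (t + 1) i₀ + 1 / (#S : ℝ) ^ 2 ≤ x (t + 1) j₁ := by
    rw [hx t i₀ hi₀, hx t j₁ hj₁S]
    refine (update_eq_or_add_le_update hi₀ hmin hj₁S ?_).resolve_left
      fun heq => hj₁₀ (hinj j₁ hj₁S i₀ hi₀ ?_)
    · exact (hlow j (mem_filter.2 ⟨hj, hj₀⟩)).trans_lt hj₁
    · rwa [hx t i₀ hi₀, hx t j₁ hj₁S]
  intro k hk
  by_cases hk₀ : x t k = x t i₀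
  · left
    rw [hx t k hk, hx t i₀ hi₀, hk₀]
  · exact Or.inr (hgap.trans (hx.le_succ_of_le hj₁S hk (hlow k (mem_filter.2 ⟨hk, hk₀⟩))))

lemma exists_detached (hx : IsTrajectory S x) {i₀ : ι} (hi₀ : i₀ ∈ S)
    (hmin : ∀ t, ∀ k ∈ S, x t i₀ ≤ x t k) :
    ∃ t, ∀ j ∈ S, x t j = x t i₀ ∨ x t i₀ + 1 ≤ x t j := by
  by_contra! hstrip
  obtain ⟨t₀, hinj⟩ := hx.eventually_injOn
  obtain ⟨M, hM⟩ := hx.exists_upper_bound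
  have hS : (0 : ℝ) < #S := by exact_mod_cast card_pos.2 ⟨i₀, hi₀⟩
  have hgrow : ∀ t ≥ t₀, x (t + 1) i₀ + 1 / (#S : ℝ) ^ 3 ≤ x (t + 1 + 1) i₀ := by
    intro t ht
    obtain ⟨j, hj, hj₀, hj₁⟩ := hstrip t
    obtain ⟨k, hk, hk₀, hk₁⟩ := hstrip (t + 1)
    have hgap := (hx.bottom_gap hi₀ (hmin t) (hinj t ht) hj hj₀ hj₁ k hk).resolve_left hk₀
    have := add_div_card_le_update (hmin (t + 1)) (by positivity) hk hgap hk₁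
    rwa [← hx (t + 1) i₀ hi₀, div_div, ← pow_succ] at this
  exact not_bddAbove_range_of_add_le_succ (u := fun k => x (t₀ + k + 1) i₀) (by positivity)
    (fun k => hgrow (t₀ + k) (Nat.le_add_right _ _))
    ⟨M, by rintro _ ⟨k, rfl⟩; exact hM _ i₀ hi₀⟩

lemma exists_stationary (hx : IsTrajectory S x) :
    ∃ T, ∀ s, ∀ i ∈ S, x (T + s) i = x T i := by
  induction S using Finset.strongInduction generalizing x with
  | H S ih =>
  rcases S.eq_empty_or_nonempty with rfl | hS
  · exact ⟨0, by simp⟩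
  obtain ⟨i₀, hi₀, h₀⟩ := S.exists_min_image (x 0) hS
  obtain ⟨t, hdet⟩ := hx.exists_detached hi₀ (hx.min_persists hi₀ h₀)
  have hy := hx.shift t
  obtain ⟨T, hT⟩ := ih _ (filter_ssubset.2 ⟨i₀, hi₀, by simp⟩) (hy.filter_of_detached hdet)
  refine ⟨t + T, fun s i hi => ?_⟩
  by_cases hiU : x t i₀ + 1 ≤ x t i
  · simpa only [add_assoc] using hT s i (mem_filter.2 ⟨hi, hiU⟩)
  · have hbot s := (hy.detached_persists hdet s i hi).1 ((hdet i hi).resolve_right hiU)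
    simpa only [add_assoc] using (hbot (T + s)).trans (hbot T).symm

end IsTrajectory

end Krause

/-- In the Krause model, opinions converge in finite time, and any
two limiting values are either equal or at distance at least 1. -/
theorem krause_finite_time_convergence (n : ℕ) (x : ℕ → Fin n → ℝ)
    (hupd : ∀ t (i : Fin n), x (t + 1) i =
      (∑ j ∈ Finset.univ.filter (fun j => |x t i - x t j| < 1), x t j) /
      ((Finset.univ.filter (fun j => |x t i - x t j| < 1)).card : ℝ)) :
    ∃ (xstar : Fin n → ℝ) (T : ℕ),
      (∀ i : Fin n, ∀ t ≥ T, x t i = xstar i) ∧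
      (∀ i j : Fin n, xstar i = xstar j ∨ 1 ≤ |xstar i - xstar j|) := by
  have hx : Krause.IsTrajectory univ x := fun t i _ => by
    rw [hupd, Krause.update, expect_eq_sum_div_card]
    rfl
  obtain ⟨T, hT⟩ := hx.exists_stationary
  refine ⟨x T, T, fun i t ht => ?_, fun i j => ?_⟩
  · obtain ⟨s, rfl⟩ := Nat.exists_eq_add_of_le ht
    exact hT s i (mem_univ i)
  · refine Krause.eq_or_one_le_abs_sub_of_update_eq (fun k _ => ?_) i (mem_univ i) j (mem_univ j)
    rw [← hx T k (mem_univ k)]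
    exact hT 1 k (mem_univ k)
end

section
/- Let x̄ ∈ ℝⁿ be an equilibrium of the weighted Krause model with positive weights w_1,…,w_n. Suppose that for every pair of distinct clusters a, b of x̄ with weights W_a and W_b, the following holds: either W_a = W_b and |a − b| ≥ 2, or W_a ≠ W_b and |a − b| > 1 + min(W_a, W_b)/max(W_a, W_b). Then x̄ is stable with respect to the addition of a perturbing agent, i.e., sup_{x̃₀ ∈ ℝ} Δ(x̃₀, δ) → 0 as δ → 0⁺. -/
open Filter

/-- One step of the weighted Krause model. -/
noncomputable def wKrauseUpdate {n : ℕ} (w : Fin n → ℝ) (x : Fin n → ℝ) :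
    Fin n → ℝ := fun i =>
  (∑ j ∈ Finset.univ.filter (fun j => |x i - x j| < 1), w j * x j) /
  (∑ j ∈ Finset.univ.filter (fun j => |x i - x j| < 1), w j)

/-- Trajectory of the weighted Krause model. -/
noncomputable def wKrauseTraj {n : ℕ} (w : Fin n → ℝ) (x0 : Fin n → ℝ) (t : ℕ) :
    Fin n → ℝ := (wKrauseUpdate w)^[t] x0

/-- The weight of the cluster of `xbar` at value `c`. -/
noncomputable def clusterWeight {n : ℕ} (w : Fin n → ℝ) (xbar : Fin n → ℝ)
    (c : ℝ) : ℝ := ∑ i ∈ Finset.univ.filter (fun i => xbar i = c), w i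

/-- Limiting opinion of original agent `i` after adding a perturbing agent of
weight `δ` and initial opinion `x0` to the equilibrium `xbar`. -/
noncomputable def perturbedLimit {n : ℕ} (w : Fin n → ℝ) (xbar : Fin n → ℝ)
    (x0 δ : ℝ) (i : Fin n) : ℝ :=
  limUnder atTop (fun t => wKrauseTraj (Fin.cons δ w) (Fin.cons x0 xbar) t i.succ)

/-- The distance `Δ(x̃₀, δ)` between the original equilibrium and the perturbed
equilibrium. -/
noncomputable def perturbDelta {n : ℕ} (w : Fin n → ℝ) (xbar : Fin n → ℝ)
    (x0 δ : ℝ) : ℝ := ∑ i, w i * |xbar i - perturbedLimit w xbar x0 δ i|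

/-- Stability of an equilibrium with respect to the addition of a perturbing
agent: `sup_{x̃₀} Δ(x̃₀, δ) → 0` as `δ → 0⁺`. -/
def IsStableEquilibrium {n : ℕ} (w : Fin n → ℝ) (xbar : Fin n → ℝ) : Prop :=
  Tendsto (fun δ : ℝ => ⨆ x0 : ℝ, perturbDelta w xbar x0 δ)
    (nhdsWithin 0 (Set.Ioi 0)) (nhds 0)

/-!
After one step of the perturbed system every original agent either stays or, if it sees the
perturber, moves towards it by at most `δ / W` (with `W` the weight of its cluster), and the system
settles within two steps. If the perturber sees no cluster, nothing moves. If it sees one cluster,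
the two merge at a point between them, which stays at distance `≥ 1` from every other cluster.
Clusters are `≥ 1` apart, so at most two clusters `a < b` are in sight, and then `b - a < 2`; by
hypothesis their weights differ, and reflecting `x ↦ -x` we may take `W_a < W_b`. After one step
the perturber sits near the barycenter of `a` and `b`, which the hypothesis
`b - a > 1 + W_a / W_b` puts out of sight of `a` but within sight of `b`; in the second step the
perturber merges with `b` alone. Every agent moves by at most `2 δ / W` in total, so
`Δ ≤ 2 n δ`.
-/

open Finset Topology

section Clusters

variable {n : ℕ} (w : Fin n → ℝ)

lemma sum_filter_eq_clusterWeight_mul (u : Fin n → ℝ) (c : ℝ) :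
    ∑ j ∈ univ.filter (fun j => u j = c), w j * u j = clusterWeight w u c * c := by
  rw [clusterWeight, sum_mul]
  exact sum_congr rfl fun j hj => by rw [(mem_filter.1 hj).2]

variable {w}

lemma le_clusterWeight (hw : ∀ i, 0 < w i) (u : Fin n → ℝ) (i : Fin n) :
    w i ≤ clusterWeight w u (u i) :=
  single_le_sum (fun j _ => (hw j).le) (by simp)

lemma clusterWeight_pos (hw : ∀ i, 0 < w i) (u : Fin n → ℝ) (i : Fin n) :
    0 < clusterWeight w u (u i) :=
  (hw i).trans_le (le_clusterWeight hw u i)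

lemma clusterWeight_eq_of_forall_eq_iff {u v : Fin n → ℝ} {i : Fin n}
    (h : ∀ j, v j = v i ↔ u j = u i) : clusterWeight w v (v i) = clusterWeight w u (u i) :=
  sum_congr (filter_congr fun j _ => h j) fun _ _ => rfl

lemma clusterWeight_neg (u : Fin n → ℝ) (i : Fin n) :
    clusterWeight w (-u) ((-u) i) = clusterWeight w u (u i) :=
  clusterWeight_eq_of_forall_eq_iff (v := -u) fun _ => neg_inj

end Clusters

section Equilibrium

variable {n : ℕ}

def IsKrauseEquilibrium (x : Fin n → ℝ) : Prop :=
  ∀ i j, x i = x j ∨ 1 ≤ |x i - x j|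

lemma IsKrauseEquilibrium.filter_neighbors_eq {x : Fin n → ℝ} (hx : IsKrauseEquilibrium x)
    (i : Fin n) :
    univ.filter (fun j => |x i - x j| < 1) = univ.filter (fun j => x j = x i) := by
  ext j
  simp only [mem_filter, mem_univ, true_and]
  constructor
  · intro hij
    rcases hx i j with h | h
    · exact h.symm
    · linarith
  · intro h
    simp [h]

lemma isKrauseEquilibrium_comp {x : Fin n → ℝ} {f : ℝ → ℝ}
    (hf : ∀ i j, x i ≠ x j → 1 ≤ |f (x i) - f (x j)|) : IsKrauseEquilibrium (f ∘ x) := by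
  intro i j
  by_cases h : x i = x j
  · exact Or.inl (congrArg f h)
  · exact Or.inr (hf i j h)

lemma IsKrauseEquilibrium.neg {x : Fin n → ℝ} (hx : IsKrauseEquilibrium x) :
    IsKrauseEquilibrium (-x) := by
  intro i j
  simpa only [Pi.neg_apply, neg_inj, neg_sub_neg, abs_sub_comm (x j)] using hx i j

lemma IsKrauseEquilibrium.cons {x : Fin n → ℝ} (hx : IsKrauseEquilibrium x) {y : ℝ}
    (hy : ∀ j, x j = y ∨ 1 ≤ |x j - y|) :
    IsKrauseEquilibrium (Fin.cons y x : Fin (n + 1) → ℝ) := by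
  intro i j
  cases i using Fin.cases <;> cases j using Fin.cases
  · exact Or.inl rfl
  · simpa [eq_comm, abs_sub_comm] using hy _
  · simpa using hy _
  · simpa using hx _ _

lemma wKrauseUpdate_eq_self {W x : Fin n → ℝ} (hW : ∀ i, 0 < W i)
    (hx : IsKrauseEquilibrium x) : wKrauseUpdate W x = x := by
  funext i
  rw [wKrauseUpdate, hx.filter_neighbors_eq, sum_filter_eq_clusterWeight_mul,
    ← clusterWeight.eq_1, mul_div_cancel_left₀ _ (clusterWeight_pos hW x i).ne']

lemma wKrauseTraj_eq_of_isKrauseEquilibrium {W x : Fin n → ℝ} (hW : ∀ i, 0 < W i) {T : ℕ}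
    (hT : IsKrauseEquilibrium (wKrauseTraj W x T)) {t : ℕ} (ht : T ≤ t) :
    wKrauseTraj W x t = wKrauseTraj W x T := by
  obtain ⟨s, rfl⟩ := Nat.exists_eq_add_of_le ht
  have hfix : Function.IsFixedPt (wKrauseUpdate W) (wKrauseTraj W x T) :=
    wKrauseUpdate_eq_self hW hT
  rw [wKrauseTraj, add_comm, Function.iterate_add_apply]
  exact hfix.iterate s

lemma wKrauseUpdate_neg (W x : Fin n → ℝ) : wKrauseUpdate W (-x) = -wKrauseUpdate W x := by
  funext i
  have habs : ∀ j, |-x i - -x j| = |x i - x j| := fun j => by rw [neg_sub_neg, abs_sub_comm]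
  simp only [wKrauseUpdate, Pi.neg_apply, habs, mul_neg, sum_neg_distrib, neg_div]

lemma wKrauseTraj_neg (W x : Fin n → ℝ) (t : ℕ) : wKrauseTraj W (-x) t = -wKrauseTraj W x t :=
  ((Function.Semiconj.iterate_right (f := Neg.neg) (fun x => (wKrauseUpdate_neg W x).symm) t)
    x).symm

end Equilibrium


/-- Where a perturber (weight `δ`, at `y`) and a cluster (weight `W`, at `c`) that see only each
other both move in one step. -/
noncomputable def mergePoint (δ y W c : ℝ) : ℝ := (δ * y + W * c) / (δ + W)

section MergePoint

variable {δ W : ℝ} (hδ : 0 ≤ δ) (hW : 0 < W) (y c : ℝ)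
include hδ hW

lemma mergePoint_sub : mergePoint δ y W c - c = δ / (δ + W) * (y - c) := by
  rw [mergePoint]
  field_simp
  ring

lemma abs_mergePoint_sub_le : |mergePoint δ y W c - c| ≤ δ / W * |y - c| := by
  rw [mergePoint_sub hδ hW, abs_mul, abs_of_nonneg (by positivity)]
  gcongr
  linarith

lemma abs_mergePoint_sub_le_of_abs_lt_one (h : |y - c| < 1) :
    |mergePoint δ y W c - c| ≤ δ / W :=
  (abs_mergePoint_sub_le hδ hW y c).trans (mul_le_of_le_one_right (by positivity) h.le)

lemma mergePoint_mem_uIcc : mergePoint δ y W c ∈ Set.uIcc c y := by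
  have ht : δ / (δ + W) ≤ 1 := div_le_one_of_le₀ (by linarith) (by positivity)
  have hmp := mergePoint_sub hδ hW y c
  have ht0 : 0 ≤ δ / (δ + W) := by positivity
  rcases le_total c y with h | h
  · exact Set.mem_uIcc.2 (Or.inl ⟨by nlinarith, by nlinarith⟩)
  · exact Set.mem_uIcc.2 (Or.inr ⟨by nlinarith, by nlinarith⟩)

end MergePoint

lemma wKrauseUpdate_cons {n : ℕ} {w u : Fin n → ℝ} (hw : ∀ i, 0 < w i)
    (hu : IsKrauseEquilibrium u) (δ y : ℝ) :
    wKrauseUpdate (Fin.cons δ w) (Fin.cons y u) =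
      Fin.cons ((δ * y + ∑ j ∈ univ.filter (fun j => |y - u j| < 1), w j * u j) /
          (δ + ∑ j ∈ univ.filter (fun j => |y - u j| < 1), w j))
        (fun i => if |u i - y| < 1 then mergePoint δ y (clusterWeight w u (u i)) (u i)
          else u i) := by
  funext k
  cases k using Fin.cases with
  | zero =>
    simp [wKrauseUpdate, sum_filter, Fin.sum_univ_succ]
  | succ i =>
    simp only [wKrauseUpdate, sum_filter, Fin.sum_univ_succ, Fin.cons_zero, Fin.cons_succ]
    rw [← sum_filter, ← sum_filter, hu.filter_neighbors_eq, sum_filter_eq_clusterWeight_mul,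
      ← clusterWeight.eq_1]
    split_ifs
    · rfl
    · simp [(clusterWeight_pos hw u i).ne']

lemma abs_wKrauseUpdate_cons_succ_sub_le {n : ℕ} {w u : Fin n → ℝ} (hw : ∀ i, 0 < w i)
    (hu : IsKrauseEquilibrium u) {δ : ℝ} (hδ : 0 ≤ δ) (y : ℝ) (i : Fin n) :
    |wKrauseUpdate (Fin.cons δ w) (Fin.cons y u) i.succ - u i| ≤
      δ / clusterWeight w u (u i) := by
  have hWi := clusterWeight_pos hw u i
  rw [wKrauseUpdate_cons hw hu, Fin.cons_succ]
  split_ifs with h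
  · exact abs_mergePoint_sub_le_of_abs_lt_one hδ hWi y (u i) (by rwa [abs_sub_comm])
  · rw [sub_self, abs_zero]
    positivity

section SeesOneCluster

variable {n : ℕ} {w u : Fin n → ℝ} (hw : ∀ i, 0 < w i) (hu : IsKrauseEquilibrium u)
  {δ y : ℝ} {k : Fin n} (hvis : ∀ j, |y - u j| < 1 ↔ u j = u k)
include hw hu hvis

lemma wKrauseUpdate_cons_of_sees_one :
    wKrauseUpdate (Fin.cons δ w) (Fin.cons y u) =
      Fin.cons (mergePoint δ y (clusterWeight w u (u k)) (u k))
        (fun j => if u j = u k then mergePoint δ y (clusterWeight w u (u k)) (u k) else u j) := by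
  rw [wKrauseUpdate_cons hw hu, filter_congr (fun j _ => hvis j), sum_filter_eq_clusterWeight_mul,
    ← clusterWeight.eq_1]
  congr 1
  funext j
  by_cases h : u j = u k
  · rw [if_pos h, if_pos (by rw [abs_sub_comm, hvis, h]), h]
  · rw [if_neg h, if_neg (by rwa [abs_sub_comm, hvis])]

lemma isKrauseEquilibrium_wKrauseUpdate_cons_of_sees_one
    (hfar : ∀ j, u j ≠ u k → 1 ≤ |mergePoint δ y (clusterWeight w u (u k)) (u k) - u j|) :
    IsKrauseEquilibrium (wKrauseUpdate (Fin.cons δ w) (Fin.cons y u)) := by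
  rw [wKrauseUpdate_cons_of_sees_one hw hu hvis]
  set M := mergePoint δ y (clusterWeight w u (u k)) (u k)
  refine IsKrauseEquilibrium.cons
    (isKrauseEquilibrium_comp (f := fun v => if v = u k then M else v) fun i j hij => ?_)
    fun j => ?_
  · by_cases hi : u i = u k <;> by_cases hj : u j = u k <;>
      simp only [hi, hj, if_true, if_false]
    · exact absurd (hi.trans hj.symm) hij
    · exact hfar j hj
    · rw [abs_sub_comm]; exact hfar i hi
    · exact (hu i j).resolve_left hij
  · simp only [Function.comp_apply]
    by_cases hj : u j = u k
    · exact Or.inl (if_pos hj)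
    · rw [if_neg hj, abs_sub_comm]
      exact Or.inr (hfar j hj)

end SeesOneCluster

section Settling

variable {n : ℕ} {w : Fin n → ℝ}

def SettlesNear (δ : ℝ) (w xbar : Fin n → ℝ) (x0 : ℝ) : Prop :=
  ∃ T, IsKrauseEquilibrium (wKrauseTraj (Fin.cons δ w) (Fin.cons x0 xbar) T) ∧
    ∀ i, |wKrauseTraj (Fin.cons δ w) (Fin.cons x0 xbar) T i.succ - xbar i| ≤
      2 * δ / clusterWeight w xbar (xbar i)

lemma perturbDelta_le_of_settlesNear (hw : ∀ i, 0 < w i) {δ : ℝ} (hδ : 0 < δ)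
    {xbar : Fin n → ℝ} {x0 : ℝ} (h : SettlesNear δ w xbar x0) :
    perturbDelta w xbar x0 δ ≤ 2 * n * δ := by
  obtain ⟨T, hT, hbound⟩ := h
  have hW : ∀ k, 0 < (Fin.cons δ w : Fin (n + 1) → ℝ) k := fun k => by
    cases k using Fin.cases
    · exact hδ
    · exact hw _
  have hlim : ∀ i, perturbedLimit w xbar x0 δ i =
      wKrauseTraj (Fin.cons δ w) (Fin.cons x0 xbar) T i.succ := fun i =>
    Tendsto.limUnder_eq <| tendsto_atTop_of_eventually_const fun t ht => by
      rw [wKrauseTraj_eq_of_isKrauseEquilibrium hW hT ht]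
  have hterm : ∀ i, w i * |xbar i - perturbedLimit w xbar x0 δ i| ≤ 2 * δ := fun i => by
    have hWi := clusterWeight_pos hw xbar i
    calc w i * |xbar i - perturbedLimit w xbar x0 δ i|
        ≤ w i * (2 * δ / clusterWeight w xbar (xbar i)) := by
          rw [hlim, abs_sub_comm]
          exact mul_le_mul_of_nonneg_left (hbound i) (hw i).le
      _ ≤ 2 * δ := by
          rw [mul_div_assoc', div_le_iff₀ hWi, mul_comm]
          exact mul_le_mul_of_nonneg_left (le_clusterWeight hw xbar i) (by linarith)
  calc perturbDelta w xbar x0 δ ≤ ∑ _i : Fin n, 2 * δ := sum_le_sum fun i _ => hterm i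
    _ = 2 * n * δ := by
      rw [sum_const, card_univ, Fintype.card_fin, nsmul_eq_mul]
      ring

lemma SettlesNear.of_neg {δ : ℝ} {xbar : Fin n → ℝ} {x0 : ℝ}
    (h : SettlesNear δ w (-xbar) (-x0)) : SettlesNear δ w xbar x0 := by
  have hcons : (Fin.cons (-x0) (-xbar) : Fin (n + 1) → ℝ) = -Fin.cons x0 xbar := by
    funext k
    cases k using Fin.cases <;> rfl
  obtain ⟨T, hT, hbound⟩ := h
  rw [hcons, wKrauseTraj_neg] at hT hbound
  refine ⟨T, by simpa using hT.neg, fun i => ?_⟩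
  have := hbound i
  rwa [clusterWeight_neg, Pi.neg_apply, Pi.neg_apply, neg_sub_neg, abs_sub_comm] at this

end Settling

lemma one_le_abs_sub_of_mem_uIcc {p q z v : ℝ} (hz : z ∈ Set.uIcc p q) (hpq : |p - q| < 2)
    (hp : 1 ≤ |p - v|) (hq : 1 ≤ |q - v|) : 1 ≤ |z - v| := by
  rw [abs_lt] at hpq
  rw [le_abs] at hp hq ⊢
  rcases Set.mem_uIcc.1 hz with ⟨h1, h2⟩ | ⟨h1, h2⟩ <;> rcases hp with hp | hp <;>
    rcases hq with hq | hq <;>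
    first | (left; linarith) | (right; linarith)

/-- The barycenter of a light cluster (weight `Wl`) and a heavy one (weight `Wh`) at distance `d`
lies at distance `≥ 1 + 2ε` from the light cluster and `< 1 - 2ε` from the heavy one. -/
def BarycenterMargin (ε Wl Wh d : ℝ) : Prop :=
  1 + 2 * ε ≤ Wh * d / (Wl + Wh) ∧ Wl * d / (Wl + Wh) + 2 * ε < 1

lemma eventually_barycenterMargin {Wa Wb d : ℝ} (hWa : 0 < Wa) (hWb : 0 < Wb) (hne : Wa ≠ Wb)
    (hd : 1 + min Wa Wb / max Wa Wb < d) (hd2 : d < 2) :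
    ∀ᶠ δ in 𝓝[>] 0,
      BarycenterMargin (δ / Wa) Wa Wb d ∨ BarycenterMargin (δ / Wb) Wb Wa d := by
  wlog h : Wa < Wb generalizing Wa Wb
  · refine (this hWb hWa hne.symm (by rwa [min_comm, max_comm]) ?_).mono fun δ hδ => hδ.symm
    exact lt_of_le_of_ne (not_lt.1 h) hne.symm
  rw [min_eq_left h.le, max_eq_right h.le] at hd
  have hS : 0 < Wa + Wb := by positivity
  have hfar : 1 < Wb * d / (Wa + Wb) := by
    rw [lt_div_iff₀ hS]
    have : Wb * (1 + Wa / Wb) = Wb + Wa := by field_simp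
    nlinarith
  have hnear : Wa * d / (Wa + Wb) < 1 := by
    rw [div_lt_one hS]
    nlinarith
  have hlim : Tendsto (fun δ : ℝ => 2 * (δ / Wa)) (𝓝[>] 0) (𝓝 0) :=
    ((by fun_prop : Continuous fun δ : ℝ => 2 * (δ / Wa)).tendsto' 0 0 (by simp)).mono_left
      nhdsWithin_le_nhds
  filter_upwards [hlim.eventually_lt_const (lt_min (sub_pos.2 hfar) (sub_pos.2 hnear))] with δ hδ
  exact Or.inl ⟨by linarith [min_le_left (Wb * d / (Wa + Wb) - 1) (1 - Wa * d / (Wa + Wb))],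
    by linarith [min_le_right (Wb * d / (Wa + Wb) - 1) (1 - Wa * d / (Wa + Wb))]⟩

section TwoClusterGeometry

variable {δ Wa Wb a b x0 : ℝ} (hδ : 0 ≤ δ) (hWa : 0 < Wa) (hWb : 0 < Wb)
  (ha : |x0 - a| < 1) (hb : |x0 - b| < 1) (hm : BarycenterMargin (δ / Wa) Wa Wb (b - a))
include hδ hWa hWb ha hb hm

/-- The positions after one step of the light cluster `a`, the heavy cluster `b` and the perturber;
the perturber's is its merge point with the barycenter of `a` and `b`. -/
lemma two_cluster_first_step :
    mergePoint δ x0 Wa a ∈ Set.Icc a b ∧ mergePoint δ x0 Wb b ∈ Set.Icc a b ∧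
    mergePoint δ x0 (Wa + Wb) ((Wa * a + Wb * b) / (Wa + Wb)) ∈ Set.Icc a b ∧
    mergePoint δ x0 Wa a + 1 ≤ mergePoint δ x0 Wb b ∧
    mergePoint δ x0 Wa a + 1 ≤ mergePoint δ x0 (Wa + Wb) ((Wa * a + Wb * b) / (Wa + Wb)) ∧
    |mergePoint δ x0 (Wa + Wb) ((Wa * a + Wb * b) / (Wa + Wb)) - mergePoint δ x0 Wb b| < 1 := by
  obtain ⟨hfar, hnear⟩ := hm
  have hS : 0 < Wa + Wb := by positivity
  have hε : 0 ≤ δ / Wa := by positivity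
  generalize hg : (Wa * a + Wb * b) / (Wa + Wb) = g
  have hgS : g * (Wa + Wb) = Wa * a + Wb * b := by rw [← hg]; field_simp
  have hga : g - a = Wb * (b - a) / (Wa + Wb) := by
    rw [eq_div_iff hS.ne']; linear_combination hgS
  have hbg : b - g = Wa * (b - a) / (Wa + Wb) := by
    rw [eq_div_iff hS.ne']; linear_combination -hgS
  rw [← hga] at hfar
  rw [← hbg] at hnear
  have hab : 0 < b - a := by nlinarith
  have hgb : g ≤ b := by nlinarith
  have hlight : Wa ≤ Wb := by nlinarith
  have hεb : δ / Wb ≤ δ / Wa := div_le_div_of_nonneg_left hδ hWa hlight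
  have hεS : δ / (Wa + Wb) * 2 ≤ δ / Wa := by
    rw [div_mul_eq_mul_div, div_le_div_iff₀ hS hWa]
    nlinarith
  have hx0 : |x0 - g| ≤ 2 := by rw [abs_le]; constructor <;> linarith [abs_lt.1 ha, abs_lt.1 hb]
  have ha1 := abs_mergePoint_sub_le_of_abs_lt_one hδ hWa x0 a ha
  have hb1 := (abs_mergePoint_sub_le_of_abs_lt_one hδ hWb x0 b hb).trans hεb
  have hy1 : |mergePoint δ x0 (Wa + Wb) g - g| ≤ δ / Wa :=
    ((abs_mergePoint_sub_le hδ hS x0 g).trans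
      (mul_le_mul_of_nonneg_left hx0 (by positivity))).trans hεS
  rw [abs_lt] at ha hb
  rw [abs_le] at ha1 hb1 hy1
  have ha1' := Set.mem_uIcc.1 (mergePoint_mem_uIcc hδ hWa x0 a)
  have hb1' := Set.mem_uIcc.1 (mergePoint_mem_uIcc hδ hWb x0 b)
  have hy1' := Set.mem_uIcc.1 (mergePoint_mem_uIcc hδ hS x0 g)
  refine ⟨⟨?_, ?_⟩, ⟨?_, ?_⟩, ⟨?_, ?_⟩, ?_, ?_, abs_lt.2 ⟨?_, ?_⟩⟩ <;>
    rcases ha1' with ha1' | ha1' <;> rcases hb1' with hb1' | hb1' <;>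
    rcases hy1' with hy1' | hy1' <;> linarith

end TwoClusterGeometry

section TwoClusterClasses

variable {n : ℕ} {u x : Fin n → ℝ} {a b p q : ℝ} (hp : p ∈ Set.Icc a b)
  (hq : q ∈ Set.Icc a b) (hpq : p + 1 ≤ q)
  (hx : ∀ k, (u k = a ∧ x k = p) ∨ (u k = b ∧ x k = q) ∨
    (x k = u k ∧ (u k + 1 ≤ a ∨ b + 1 ≤ u k)))
include hp hq hpq hx

lemma isKrauseEquilibrium_of_two_cluster_classes (hu : IsKrauseEquilibrium u) :
    IsKrauseEquilibrium x := by
  obtain ⟨hpa, hpb⟩ := hp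
  obtain ⟨hqa, hqb⟩ := hq
  intro k l
  rcases hx k with ⟨hk, hxk⟩ | ⟨hk, hxk⟩ | ⟨hxk, hk | hk⟩ <;>
    rcases hx l with ⟨hl, hxl⟩ | ⟨hl, hxl⟩ | ⟨hxl, hl | hl⟩ <;> rw [hxk, hxl]
  all_goals first
    | exact Or.inl rfl
    | exact hu k l
    | (right; rw [le_abs]; first | (left; linarith) | (right; linarith))

lemma eq_iff_of_two_cluster_classes (k l : Fin n) : x k = x l ↔ u k = u l := by
  obtain ⟨hpa, hpb⟩ := hp
  obtain ⟨hqa, hqb⟩ := hq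
  rcases hx k with ⟨hk, hxk⟩ | ⟨hk, hxk⟩ | ⟨hxk, hk | hk⟩ <;>
    rcases hx l with ⟨hl, hxl⟩ | ⟨hl, hxl⟩ | ⟨hxl, hl | hl⟩ <;> rw [hxk, hxl]
  all_goals first
    | exact Iff.rfl
    | (constructor <;> intro h <;> linarith)

lemma isKrauseEquilibrium_two_cluster_second_step {w : Fin n → ℝ} (hw : ∀ i, 0 < w i)
    {δ : ℝ} (hδ : 0 ≤ δ) (hu : IsKrauseEquilibrium u) {y : ℝ} (hy : y ∈ Set.Icc a b)
    (hpy : p + 1 ≤ y) (hqy : |y - q| < 1) {j : Fin n} (hj : u j = b) :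
    IsKrauseEquilibrium (wKrauseUpdate (Fin.cons δ w) (Fin.cons y x)) := by
  have hx' := isKrauseEquilibrium_of_two_cluster_classes hp hq hpq hx hu
  obtain ⟨hpa, hpb⟩ := hp
  obtain ⟨hqa, hqb⟩ := hq
  obtain ⟨hya, hyb⟩ := hy
  have hxj : x j = q := by
    rcases hx j with ⟨h, -⟩ | ⟨-, h⟩ | ⟨-, h | h⟩ <;> first | exact h | linarith
  have hvis : ∀ k, |y - x k| < 1 ↔ x k = x j := by
    intro k
    rw [hxj]
    rcases hx k with ⟨-, h⟩ | ⟨-, h⟩ | ⟨h, h' | h'⟩ <;> rw [h]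
    all_goals first
      | exact iff_of_true hqy rfl
      | exact iff_of_false (by rw [abs_lt]; intro h; linarith) (by intro h; linarith)
  refine isKrauseEquilibrium_wKrauseUpdate_cons_of_sees_one hw hx' hvis fun k hk => ?_
  have hM := Set.mem_uIcc.1 (mergePoint_mem_uIcc hδ (clusterWeight_pos hw x j) y (x j))
  rw [hxj] at hM hk ⊢
  rcases hx k with ⟨-, h⟩ | ⟨-, h⟩ | ⟨h, h' | h'⟩ <;> rw [h] at hk ⊢
  all_goals first
    | exact absurd rfl hk
    | (rw [le_abs]; rcases hM with hM | hM <;> first | (left; linarith) | (right; linarith))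

end TwoClusterClasses

lemma wKrauseUpdate_cons_zero_of_sees_two {n : ℕ} {w u : Fin n → ℝ} (hw : ∀ i, 0 < w i)
    (hu : IsKrauseEquilibrium u) (δ : ℝ) {y : ℝ} {i j : Fin n} (hij : u i ≠ u j)
    (hvis : ∀ k, |y - u k| < 1 ↔ u k = u i ∨ u k = u j) :
    wKrauseUpdate (Fin.cons δ w) (Fin.cons y u) 0 =
      mergePoint δ y (clusterWeight w u (u i) + clusterWeight w u (u j))
        ((clusterWeight w u (u i) * u i + clusterWeight w u (u j) * u j) /
          (clusterWeight w u (u i) + clusterWeight w u (u j))) := by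
  have hV : univ.filter (fun k => |y - u k| < 1) =
      univ.filter (fun k => u k = u i) ∪ univ.filter (fun k => u k = u j) := by
    ext k
    simp [hvis]
  have hdisj : Disjoint (univ.filter (fun k => u k = u i)) (univ.filter (fun k => u k = u j)) :=
    disjoint_filter.2 fun k _ hi hj => hij (hi.symm.trans hj)
  have hS : clusterWeight w u (u i) + clusterWeight w u (u j) ≠ 0 :=
    (add_pos (clusterWeight_pos hw u i) (clusterWeight_pos hw u j)).ne'
  rw [wKrauseUpdate_cons hw hu, Fin.cons_zero, hV, sum_union hdisj, sum_union hdisj,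
    sum_filter_eq_clusterWeight_mul, sum_filter_eq_clusterWeight_mul, ← clusterWeight.eq_1,
    ← clusterWeight.eq_1, mergePoint, mul_div_cancel₀ _ hS]

lemma wKrauseUpdate_cons_succ_of_sees_two {n : ℕ} {w xbar : Fin n → ℝ} (hw : ∀ i, 0 < w i)
    (hxbar : IsKrauseEquilibrium xbar) {δ x0 : ℝ} {i j : Fin n}
    (hvis : ∀ k, |x0 - xbar k| < 1 ↔ xbar k = xbar i ∨ xbar k = xbar j) (k : Fin n) :
    (xbar k = xbar i ∧ wKrauseUpdate (Fin.cons δ w) (Fin.cons x0 xbar) k.succ =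
        mergePoint δ x0 (clusterWeight w xbar (xbar i)) (xbar i)) ∨
      (xbar k = xbar j ∧ wKrauseUpdate (Fin.cons δ w) (Fin.cons x0 xbar) k.succ =
        mergePoint δ x0 (clusterWeight w xbar (xbar j)) (xbar j)) ∨
      (wKrauseUpdate (Fin.cons δ w) (Fin.cons x0 xbar) k.succ = xbar k ∧
        (xbar k + 1 ≤ xbar i ∨ xbar j + 1 ≤ xbar k)) := by
  have hxi := (hvis i).2 (Or.inl rfl)
  have hxj := (hvis j).2 (Or.inr rfl)
  rw [wKrauseUpdate_cons hw hxbar, Fin.cons_succ]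
  rcases eq_or_ne (xbar k) (xbar i) with hki | hki
  · rw [hki, abs_sub_comm, if_pos hxi]
    exact Or.inl ⟨rfl, rfl⟩
  rcases eq_or_ne (xbar k) (xbar j) with hkj | hkj
  · rw [hkj, abs_sub_comm, if_pos hxj]
    exact Or.inr (Or.inl ⟨rfl, rfl⟩)
  rw [abs_sub_comm, if_neg (by rw [hvis]; tauto)]
  have hki' := (hxbar k i).resolve_left hki
  have hkj' := (hxbar k j).resolve_left hkj
  rw [abs_lt] at hxi hxj
  rw [le_abs] at hki' hkj'
  refine Or.inr (Or.inr ⟨rfl, ?_⟩)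
  rcases hki' with h | h <;> rcases hkj' with h' | h' <;>
    first | (left; linarith) | (right; linarith)

section Cases

variable {n : ℕ} {w xbar : Fin n → ℝ} (hw : ∀ i, 0 < w i) {δ : ℝ} (hδ : 0 ≤ δ)
  (hxbar : IsKrauseEquilibrium xbar) {x0 : ℝ}
include hw hδ hxbar

lemma settlesNear_of_sees_none (hnone : ∀ k, 1 ≤ |x0 - xbar k|) : SettlesNear δ w xbar x0 := by
  refine ⟨0, hxbar.cons fun k => Or.inr (by rw [abs_sub_comm]; exact hnone k), fun i => ?_⟩
  have := clusterWeight_pos hw xbar i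
  rw [wKrauseTraj, Function.iterate_zero_apply, Fin.cons_succ, sub_self, abs_zero]
  positivity

lemma settlesNear_of_sees_one {k : Fin n} (hvis : ∀ j, |x0 - xbar j| < 1 ↔ xbar j = xbar k) :
    SettlesNear δ w xbar x0 := by
  have hWk := clusterWeight_pos hw xbar k
  refine ⟨1, isKrauseEquilibrium_wKrauseUpdate_cons_of_sees_one hw hxbar hvis fun j hj => ?_,
    fun i => ?_⟩
  · have hk : |xbar k - x0| < 1 := by rw [abs_sub_comm, hvis]
    exact one_le_abs_sub_of_mem_uIcc (mergePoint_mem_uIcc hδ hWk x0 (xbar k)) (by linarith)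
      ((hxbar k j).resolve_left (Ne.symm hj)) (not_lt.1 (mt (hvis j).1 hj))
  · have hWi := clusterWeight_pos hw xbar i
    calc _ ≤ δ / clusterWeight w xbar (xbar i) :=
          abs_wKrauseUpdate_cons_succ_sub_le hw hxbar hδ x0 i
      _ ≤ 2 * δ / clusterWeight w xbar (xbar i) := by gcongr; linarith

lemma settlesNear_of_sees_two_ordered {i j : Fin n}
    (hvis : ∀ k, |x0 - xbar k| < 1 ↔ xbar k = xbar i ∨ xbar k = xbar j)
    (hm : BarycenterMargin (δ / clusterWeight w xbar (xbar i)) (clusterWeight w xbar (xbar i))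
      (clusterWeight w xbar (xbar j)) (xbar j - xbar i)) : SettlesNear δ w xbar x0 := by
  have hWi := clusterWeight_pos hw xbar i
  have hWj := clusterWeight_pos hw xbar j
  have hxi := (hvis i).2 (Or.inl rfl)
  have hxj := (hvis j).2 (Or.inr rfl)
  obtain ⟨ha1, hb1, hy1, hab1, hay1, hby1⟩ := two_cluster_first_step hδ hWi hWj hxi hxj hm
  have hij : xbar i < xbar j := by linarith [ha1.1, hb1.2]
  set z1 := wKrauseUpdate (Fin.cons δ w) (Fin.cons x0 xbar)
  have hz10 : z1 0 = _ := wKrauseUpdate_cons_zero_of_sees_two hw hxbar δ hij.ne hvis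
  have hz1 := wKrauseUpdate_cons_succ_of_sees_two (δ := δ) hw hxbar hvis
  have hu1 := isKrauseEquilibrium_of_two_cluster_classes ha1 hb1 hab1 hz1 hxbar
  have htraj : wKrauseTraj (Fin.cons δ w) (Fin.cons x0 xbar) 2 =
      wKrauseUpdate (Fin.cons δ w) (Fin.cons (z1 0) (fun k => z1 k.succ)) := by
    change _ = wKrauseUpdate _ (Fin.cons (z1 0) (Fin.tail z1))
    rw [Fin.cons_self_tail]
    rfl
  rw [← hz10] at hy1 hay1 hby1
  refine ⟨2, htraj ▸ isKrauseEquilibrium_two_cluster_second_step ha1 hb1 hab1 hz1 hw hδ hxbar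
    hy1 hay1 hby1 rfl, fun k => ?_⟩
  have hW1 := clusterWeight_eq_of_forall_eq_iff (w := w) fun l =>
    eq_iff_of_two_cluster_classes ha1 hb1 hab1 hz1 l k
  rw [htraj]
  calc _ ≤ |wKrauseUpdate (Fin.cons δ w) (Fin.cons (z1 0) (fun k => z1 k.succ)) k.succ -
          z1 k.succ| + |z1 k.succ - xbar k| := abs_sub_le _ _ _
    _ ≤ δ / clusterWeight w xbar (xbar k) + δ / clusterWeight w xbar (xbar k) := by
      rw [← hW1]
      exact add_le_add (abs_wKrauseUpdate_cons_succ_sub_le hw hu1 hδ _ k)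
        (hW1 ▸ abs_wKrauseUpdate_cons_succ_sub_le hw hxbar hδ x0 k)
    _ = 2 * δ / clusterWeight w xbar (xbar k) := by ring

end Cases

def CloseClustersMargin {n : ℕ} (δ : ℝ) (w xbar : Fin n → ℝ) : Prop :=
  ∀ i j, xbar i ≠ xbar j → |xbar i - xbar j| < 2 →
    BarycenterMargin (δ / clusterWeight w xbar (xbar i)) (clusterWeight w xbar (xbar i))
      (clusterWeight w xbar (xbar j)) |xbar i - xbar j| ∨
    BarycenterMargin (δ / clusterWeight w xbar (xbar j)) (clusterWeight w xbar (xbar j))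
      (clusterWeight w xbar (xbar i)) |xbar i - xbar j|

section Classification

variable {n : ℕ} {w xbar : Fin n → ℝ} (hw : ∀ i, 0 < w i) {δ : ℝ} (hδ : 0 ≤ δ)
  (hxbar : IsKrauseEquilibrium xbar) {x0 : ℝ}
include hw hδ hxbar

lemma settlesNear_of_sees_two {i j : Fin n}
    (hvis : ∀ k, |x0 - xbar k| < 1 ↔ xbar k = xbar i ∨ xbar k = xbar j)
    (hm : BarycenterMargin (δ / clusterWeight w xbar (xbar i)) (clusterWeight w xbar (xbar i))
      (clusterWeight w xbar (xbar j)) |xbar i - xbar j|) : SettlesNear δ w xbar x0 := by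
  rcases le_total (xbar i) (xbar j) with h | h
  · rw [abs_sub_comm, abs_of_nonneg (sub_nonneg.2 h)] at hm
    exact settlesNear_of_sees_two_ordered hw hδ hxbar hvis hm
  · refine SettlesNear.of_neg (settlesNear_of_sees_two_ordered hw hδ hxbar.neg (i := i) (j := j)
      (fun k => ?_) ?_)
    · simp only [Pi.neg_apply, neg_sub_neg, abs_sub_comm, hvis, neg_inj]
    · rwa [clusterWeight_neg, clusterWeight_neg, Pi.neg_apply, Pi.neg_apply, neg_sub_neg,
        ← abs_of_nonneg (sub_nonneg.2 h)]

lemma settlesNear_of_closeClustersMargin (hsmall : CloseClustersMargin δ w xbar) :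
    SettlesNear δ w xbar x0 := by
  by_cases hsee : ∃ i, |x0 - xbar i| < 1
  swap
  · push Not at hsee
    exact settlesNear_of_sees_none hw hδ hxbar hsee
  obtain ⟨i, hi⟩ := hsee
  by_cases hsee₂ : ∃ j, |x0 - xbar j| < 1 ∧ xbar j ≠ xbar i
  swap
  · push Not at hsee₂
    exact settlesNear_of_sees_one hw hδ hxbar fun k => ⟨hsee₂ k, fun h => h ▸ hi⟩
  obtain ⟨j, hj, hji⟩ := hsee₂
  have hji' := (hxbar j i).resolve_left hji
  rw [abs_lt] at hi hj
  rw [le_abs] at hji'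
  have hvis : ∀ k, |x0 - xbar k| < 1 ↔ xbar k = xbar i ∨ xbar k = xbar j := by
    refine fun k => ⟨fun hk => ?_, ?_⟩
    swap
    · rintro (h | h) <;> rw [h, abs_lt] <;> constructor <;> linarith
    by_contra! h
    have hki := (hxbar k i).resolve_left h.1
    have hkj := (hxbar k j).resolve_left h.2
    rw [abs_lt] at hk
    rw [le_abs] at hki hkj
    rcases hki with _ | _ <;> rcases hkj with _ | _ <;> rcases hji' with _ | _ <;> linarith
  have hd : |xbar i - xbar j| < 2 := by rw [abs_lt]; constructor <;> linarith
  rcases hsmall i j (Ne.symm hji) hd with hm | hm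
  · exact settlesNear_of_sees_two hw hδ hxbar hvis hm
  · rw [abs_sub_comm] at hm
    exact settlesNear_of_sees_two hw hδ hxbar (fun k => (hvis k).trans or_comm) hm

end Classification

/-- If every pair of distinct clusters of an equilibrium of the
weighted Krause model satisfies the inter-cluster distance condition, then the
equilibrium is stable with respect to the addition of a perturbing agent. -/
theorem krause_stability_sufficient {n : ℕ} (w : Fin n → ℝ) (hw : ∀ i, 0 < w i)
    (xbar : Fin n → ℝ)
    (heq : ∀ i j : Fin n, xbar i = xbar j ∨ 1 ≤ |xbar i - xbar j|)
    (hclus : ∀ a b : ℝ, (∃ i, xbar i = a) → (∃ j, xbar j = b) → a ≠ b →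
      (clusterWeight w xbar a = clusterWeight w xbar b ∧ 2 ≤ |a - b|) ∨
      (clusterWeight w xbar a ≠ clusterWeight w xbar b ∧
        1 + min (clusterWeight w xbar a) (clusterWeight w xbar b) /
            max (clusterWeight w xbar a) (clusterWeight w xbar b) < |a - b|)) :
    IsStableEquilibrium w xbar := by
  have hsmall : ∀ᶠ δ in 𝓝[>] 0, CloseClustersMargin δ w xbar := by
    refine eventually_all.2 fun i => eventually_all.2 fun j => ?_
    by_cases hij : xbar i ≠ xbar j ∧ |xbar i - xbar j| < 2
    · rcases hclus _ _ ⟨i, rfl⟩ ⟨j, rfl⟩ hij.1 with ⟨-, h⟩ | ⟨hne, hd⟩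
      · exact absurd hij.2 (not_lt.2 h)
      · exact (eventually_barycenterMargin (clusterWeight_pos hw xbar i)
          (clusterWeight_pos hw xbar j) hne hd hij.2).mono fun δ h _ _ => h
    · exact Eventually.of_forall fun δ h1 h2 => absurd ⟨h1, h2⟩ hij
  have hlim : Tendsto (fun δ : ℝ => 2 * n * δ) (𝓝[>] 0) (𝓝 0) :=
    ((by fun_prop : Continuous fun δ : ℝ => 2 * n * δ).tendsto' 0 0 (by simp)).mono_left
      nhdsWithin_le_nhds
  refine squeeze_zero' (Eventually.of_forall fun δ => Real.iSup_nonneg fun x0 =>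
    sum_nonneg fun i _ => mul_nonneg (hw i).le (abs_nonneg _)) ?_ hlim
  filter_upwards [hsmall, self_mem_nhdsWithin] with δ hδsmall hδ
  exact ciSup_le fun x0 => perturbDelta_le_of_settlesNear hw hδ
    (settlesNear_of_closeClustersMargin hw hδ.le heq hδsmall)
end

section
/- Let x̄ ∈ ℝⁿ be an equilibrium of the weighted Krause model with positive weights w_1,…,w_n. If x̄ is stable with respect to the addition of a perturbing agent, then for every pair of distinct clusters a, b of x̄ with weights W_a and W_b, the following holds: either W_a = W_b and |a − b| ≥ 2, or W_a ≠ W_b and |a − b| > 1 + min(W_a, W_b)/max(W_a, W_b). Equivalently, if two distinct clusters a, b of x̄ satisfy |a − b| < 2 and |a − b| ≤ 1 + min(W_a, W_b)/max(W_a, W_b), then x̄ is not stable. -/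
open Filter

/-!
Let `a < b` be clusters of weights `Wa, Wb` with `b - a < 2` and
`max Wa Wb * (b - a) ≤ Wa + Wb`. A perturbing agent of weight `δ` placed at `(a + b) / 2` sees
both clusters, which see neither each other nor any other cluster. Lumping each cluster into one
agent, the perturbed system is a three-agent Krause model with weights `δ, Wa, Wb`, while all
other clusters stay frozen. The weight condition keeps the perturber within distance `1` of both
outer agents, whose gap shrinks by the factor `(Wa + Wb) / (δ + Wa + Wb)` at each step until all
three merge at some `g ∈ [a, b]`; hence `Δ ≥ Wa (g - a) + Wb (b - g) ≥ min Wa Wb` for every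
`δ > 0`. The same reduction, for an arbitrary position of the perturber (which sees at most two
clusters), shows that no agent moves by more than `2`, so `sup Δ` is finite, bounded below by
`min Wa Wb`, and cannot tend to `0`.
-/

open Set Finset

namespace WKrause

section Model

variable {m : ℕ} {w x : Fin m → ℝ}

def IsEquilibrium (x : Fin m → ℝ) : Prop :=
  ∀ i j, x i = x j ∨ 1 ≤ |x i - x j|

lemma isEquilibrium_const (g : ℝ) : IsEquilibrium (fun _ : Fin m => g) :=
  fun _ _ => .inl rfl

lemma isEquilibrium_of_forall_eq_or_eq {u v : ℝ} (hx : ∀ i, x i = u ∨ x i = v)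
    (huv : 1 ≤ |u - v|) : IsEquilibrium x := by
  intro i j
  rcases hx i with hi | hi <;> rcases hx j with hj | hj <;> rw [hi, hj]
  · exact .inl rfl
  · exact .inr huv
  · exact .inr (by rwa [abs_sub_comm])
  · exact .inl rfl

lemma sum_neighbour_weight_pos (hw : ∀ j, 0 < w j) (x : Fin m → ℝ) (i : Fin m) :
    0 < ∑ j ∈ Finset.univ.filter (fun j => |x i - x j| < 1), w j :=
  sum_pos (fun j _ => hw j) ⟨i, by simp⟩

lemma wKrauseUpdate_apply_eq_self (hw : ∀ j, 0 < w j) {i : Fin m}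
    (hx : ∀ j, |x i - x j| < 1 → x j = x i) : wKrauseUpdate w x i = x i := by
  have hsum : ∀ j ∈ Finset.univ.filter (fun j => |x i - x j| < 1), w j * x j = w j * x i :=
    fun j hj => by rw [hx j (mem_filter.1 hj).2]
  rw [wKrauseUpdate, sum_congr rfl hsum, ← sum_mul,
    mul_div_cancel_left₀ _ (sum_neighbour_weight_pos hw x i).ne']

lemma wKrauseUpdate_of_isEquilibrium (hw : ∀ j, 0 < w j) (hx : IsEquilibrium x) :
    wKrauseUpdate w x = x :=
  funext fun i => wKrauseUpdate_apply_eq_self hw fun j hj =>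
    ((hx j i).resolve_right fun h => by rw [abs_sub_comm] at h; linarith)

lemma wKrauseUpdate_eq_const_of_mem_Icc {lo hi : ℝ} (hx : ∀ j, x j ∈ Icc lo hi)
    (h : hi - lo < 1) : wKrauseUpdate w x = fun _ => (∑ j, w j * x j) / ∑ j, w j := by
  funext i
  have hnear : ∀ j ∈ Finset.univ, |x i - x j| < 1 := fun j _ =>
    (Real.dist_le_of_mem_Icc (hx i) (hx j)).trans_lt h
  rw [wKrauseUpdate, filter_true_of_mem hnear]

lemma wKrauseUpdate_mem_Icc (hw : ∀ j, 0 < w j) {lo hi : ℝ} (hx : ∀ j, x j ∈ Icc lo hi)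
    (i : Fin m) : wKrauseUpdate w x i ∈ Icc lo hi := by
  have hpos := sum_neighbour_weight_pos hw x i
  rw [wKrauseUpdate, Set.mem_Icc, le_div_iff₀ hpos, div_le_iff₀ hpos, mul_sum, mul_sum]
  exact ⟨sum_le_sum fun j _ => by nlinarith [(hx j).1, hw j],
    sum_le_sum fun j _ => by nlinarith [(hx j).2, hw j]⟩

lemma wKrauseTraj_succ (w x : Fin m → ℝ) (t : ℕ) :
    wKrauseTraj w x (t + 1) = wKrauseUpdate w (wKrauseTraj w x t) :=
  Function.iterate_succ_apply' _ _ _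

lemma wKrauseTraj_mem_Icc (hw : ∀ j, 0 < w j) {lo hi : ℝ} (hx : ∀ j, x j ∈ Icc lo hi)
    (t : ℕ) (i : Fin m) : wKrauseTraj w x t i ∈ Icc lo hi := by
  induction t generalizing i with
  | zero => exact hx i
  | succ t ih => rw [wKrauseTraj_succ]; exact wKrauseUpdate_mem_Icc hw ih i

lemma wKrauseTraj_eq_of_isEquilibrium (hw : ∀ j, 0 < w j) {T t : ℕ}
    (hT : IsEquilibrium (wKrauseTraj w x T)) (ht : T ≤ t) :
    wKrauseTraj w x t = wKrauseTraj w x T := by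
  induction t, ht using Nat.le_induction with
  | base => rfl
  | succ t _ ih => rw [wKrauseTraj_succ, ih, wKrauseUpdate_of_isEquilibrium hw hT]

lemma tendsto_wKrauseTraj_of_isEquilibrium (hw : ∀ j, 0 < w j) {T : ℕ}
    (hT : IsEquilibrium (wKrauseTraj w x T)) (i : Fin m) :
    Tendsto (fun t => wKrauseTraj w x t i) atTop (nhds (wKrauseTraj w x T i)) :=
  tendsto_const_nhds.congr' <| (eventually_ge_atTop T).mono fun _ ht => by
    simp only [wKrauseTraj_eq_of_isEquilibrium hw hT ht]

end Model

section Lumping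

/- A labelling `π : Fin m → Option (Fin k)` represents agent `j` of a large system by agent
`π j = some q` of a small one, which carries the total weight of the agents it represents;
agents with `π j = none` keep their own opinion `x j` and are meant to stay frozen. -/

variable {m k : ℕ} {w x : Fin m → ℝ} {π : Fin m → Option (Fin k)} {lo hi : ℝ}

def lumpWeight (w : Fin m → ℝ) (π : Fin m → Option (Fin k)) (q : Fin k) : ℝ :=
  ∑ j ∈ Finset.univ.filter (fun j => π j = some q), w j

def overwrite (π : Fin m → Option (Fin k)) (x : Fin m → ℝ) (z : Fin k → ℝ) :
    Fin m → ℝ :=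
  fun j => (π j).elim (x j) z

structure IsFrozenOutside (π : Fin m → Option (Fin k)) (x : Fin m → ℝ) (lo hi : ℝ) :
    Prop where
  far : ∀ j, π j = none → ∀ u ∈ Icc lo hi, 1 ≤ |u - x j|
  isEquilibrium : ∀ i j, π i = none → π j = none → x i = x j ∨ 1 ≤ |x i - x j|

lemma sum_neighbour_overwrite (f : ℝ → ℝ) {z : Fin k → ℝ} {c : ℝ}
    (hfar : ∀ j, π j = none → 1 ≤ |c - x j|) :
    ∑ j ∈ Finset.univ.filter (fun j => |c - overwrite π x z j| < 1),
        w j * f (overwrite π x z j) =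
      ∑ q ∈ Finset.univ.filter (fun q => |c - z q| < 1), lumpWeight w π q * f (z q) := by
  rw [sum_filter, sum_filter, ← sum_fiberwise Finset.univ π, Fintype.sum_option]
  have hnone : ∑ j ∈ Finset.univ.filter (fun j => π j = none),
      (if |c - overwrite π x z j| < 1 then w j * f (overwrite π x z j) else 0) = 0 := by
    refine sum_eq_zero fun j hj => if_neg ?_
    have hj := (mem_filter.1 hj).2
    simpa [overwrite, hj] using hfar j hj
  rw [hnone, zero_add]
  refine sum_congr rfl fun q _ => ?_
  have hsome : ∀ j ∈ Finset.univ.filter (fun j => π j = some q),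
      (if |c - overwrite π x z j| < 1 then w j * f (overwrite π x z j) else 0) =
        if |c - z q| < 1 then w j * f (z q) else 0 := fun j hj => by
    simp [overwrite, (mem_filter.1 hj).2]
  rw [sum_congr rfl hsome, lumpWeight, sum_mul]
  split_ifs <;> simp

lemma wKrauseUpdate_overwrite (hw : ∀ j, 0 < w j) (hx : IsFrozenOutside π x lo hi)
    {z : Fin k → ℝ} (hz : ∀ q, z q ∈ Icc lo hi) :
    wKrauseUpdate w (overwrite π x z) = overwrite π x (wKrauseUpdate (lumpWeight w π) z) := by
  funext j
  cases hj : π j with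
  | none =>
    have hxj : overwrite π x z j = x j := by simp [overwrite, hj]
    rw [show overwrite π x (wKrauseUpdate (lumpWeight w π) z) j = x j by simp [overwrite, hj],
      ← hxj]
    refine wKrauseUpdate_apply_eq_self hw fun i hi => ?_
    cases hi' : π i with
    | none =>
      simp only [overwrite, hj, hi', Option.elim_none] at hi ⊢
      exact ((hx.isEquilibrium j i hj hi').resolve_right hi.not_ge).symm
    | some q =>
      simp only [overwrite, hj, hi', Option.elim_none, Option.elim_some] at hi
      exact absurd hi (by rw [abs_sub_comm]; exact (hx.far j hj _ (hz q)).not_gt)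
  | some q =>
    have hfar : ∀ i, π i = none → 1 ≤ |z q - x i| := fun i hi => hx.far i hi _ (hz q)
    have hxj : overwrite π x z j = z q := by simp [overwrite, hj]
    have hnum := sum_neighbour_overwrite (w := w) (z := z) id hfar
    have hden := sum_neighbour_overwrite (w := w) (z := z) (fun _ => 1) hfar
    simp only [id, mul_one] at hnum hden
    rw [wKrauseUpdate, hxj, hnum, hden]
    simp [overwrite, hj, wKrauseUpdate]

lemma wKrauseTraj_overwrite (hw : ∀ j, 0 < w j) (hW : ∀ q, 0 < lumpWeight w π q)
    (hx : IsFrozenOutside π x lo hi) {z : Fin k → ℝ} (hz : ∀ q, z q ∈ Icc lo hi)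
    (t : ℕ) :
    wKrauseTraj w (overwrite π x z) t = overwrite π x (wKrauseTraj (lumpWeight w π) z t) := by
  induction t with
  | zero => rfl
  | succ t ih =>
    rw [wKrauseTraj_succ, ih, wKrauseUpdate_overwrite hw hx (wKrauseTraj_mem_Icc hW hz t),
      wKrauseTraj_succ]

lemma tendsto_wKrauseTraj_overwrite (hw : ∀ j, 0 < w j) (hW : ∀ q, 0 < lumpWeight w π q)
    (hx : IsFrozenOutside π x lo hi) {z : Fin k → ℝ} (hz : ∀ q, z q ∈ Icc lo hi) {T : ℕ}
    (hT : IsEquilibrium (wKrauseTraj (lumpWeight w π) z T)) (j : Fin m) :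
    Tendsto (fun t => wKrauseTraj w (overwrite π x z) t j) atTop
      (nhds (overwrite π x (wKrauseTraj (lumpWeight w π) z T) j)) := by
  simp only [wKrauseTraj_overwrite hw hW hx hz, overwrite]
  cases π j with
  | none => exact tendsto_const_nhds
  | some q => exact tendsto_wKrauseTraj_of_isEquilibrium hW hT q

end Lumping

section Perturbation

variable {n k : ℕ} {w xbar : Fin n → ℝ} {c : Fin k → ℝ} {y lo hi δ : ℝ}

/- Label `0` is the perturbing agent and label `q.succ` the cluster at `c q`; the agents of all
other clusters are unlabelled. -/
noncomputable def perturbLabel (c : Fin k → ℝ) (xbar : Fin n → ℝ) :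
    Fin (n + 1) → Option (Fin (k + 1)) :=
  Fin.cons (some 0) fun i => (Function.partialInv c (xbar i)).map Fin.succ

noncomputable def reducedWeight (δ : ℝ) (w xbar : Fin n → ℝ) (c : Fin k → ℝ) :
    Fin (k + 1) → ℝ :=
  Fin.cons δ fun q => clusterWeight w xbar (c q)

lemma perturbLabel_succ_eq_some_succ (hc : Function.Injective c) (i : Fin n) (q : Fin k) :
    perturbLabel c xbar i.succ = some q.succ ↔ xbar i = c q := by
  simp [perturbLabel, hc.isPartialInv q, eq_comm]

lemma perturbLabel_succ_ne_some_zero (i : Fin n) : perturbLabel c xbar i.succ ≠ some 0 := by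
  simp [perturbLabel]

lemma lumpWeight_perturbLabel (hc : Function.Injective c) (δ : ℝ) :
    lumpWeight (Fin.cons δ w) (perturbLabel c xbar) = reducedWeight δ w xbar c := by
  funext q
  rw [lumpWeight, sum_filter, Fin.sum_univ_succ]
  cases q using Fin.cases with
  | zero => simp [perturbLabel, reducedWeight]
  | succ q =>
    simp [clusterWeight, sum_filter, perturbLabel, reducedWeight, (Fin.succ_ne_zero q).symm,
      hc.isPartialInv q, eq_comm (a := c q)]

lemma overwrite_perturbLabel (hc : Function.Injective c) (y : ℝ) :
    overwrite (perturbLabel c xbar) (Fin.cons y xbar) (Matrix.vecCons y c) =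
      Fin.cons y xbar := by
  funext j
  cases j using Fin.cases with
  | zero => rfl
  | succ i =>
    cases h : perturbLabel c xbar i.succ with
    | none => simp [overwrite, h]
    | some q =>
      cases q using Fin.cases with
      | zero => exact absurd h (perturbLabel_succ_ne_some_zero i)
      | succ q => simp [overwrite, h, (perturbLabel_succ_eq_some_succ hc i q).1 h]

lemma clusterWeight_pos (hw : ∀ i, 0 < w i) {v : ℝ} (hv : ∃ i, xbar i = v) :
    0 < clusterWeight w xbar v := by
  obtain ⟨i, rfl⟩ := hv
  exact sum_pos (fun j _ => hw j) ⟨i, by simp⟩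

/- `c` lists the clusters that the perturbing agent at `y` can interact with; the opinions of the
reduced system never leave `[lo, hi]`, and every other cluster is at distance at least `1` from
that window. -/
structure IsPerturbationWindow (xbar : Fin n → ℝ) (c : Fin k → ℝ) (y lo hi : ℝ) :
    Prop where
  injective : Function.Injective c
  isCluster : ∀ q, ∃ i, xbar i = c q
  perturber_mem : y ∈ Icc lo hi
  cluster_mem : ∀ q, c q ∈ Icc lo hi
  far : ∀ i, (∀ q, c q ≠ xbar i) → ∀ u ∈ Icc lo hi, 1 ≤ |u - xbar i|

lemma IsPerturbationWindow.vecCons_mem (hwin : IsPerturbationWindow xbar c y lo hi) :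
    ∀ q, Matrix.vecCons y c q ∈ Icc lo hi :=
  Fin.cases hwin.perturber_mem hwin.cluster_mem

lemma IsPerturbationWindow.reducedWeight_pos (hwin : IsPerturbationWindow xbar c y lo hi)
    (hw : ∀ i, 0 < w i) (hδ : 0 < δ) : ∀ q, 0 < reducedWeight δ w xbar c q :=
  Fin.cases hδ fun q => clusterWeight_pos hw (hwin.isCluster q)

lemma IsPerturbationWindow.isFrozenOutside (heq : IsEquilibrium xbar)
    (hwin : IsPerturbationWindow xbar c y lo hi) :
    IsFrozenOutside (perturbLabel c xbar) (Fin.cons y xbar) lo hi where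
  far j hj := by
    cases j using Fin.cases with
    | zero => simp [perturbLabel] at hj
    | succ i =>
      refine hwin.far i fun q hq => ?_
      simp [perturbLabel, ← hq, Function.partialInv_left hwin.injective] at hj
  isEquilibrium i j hi hj := by
    cases i using Fin.cases with
    | zero => simp [perturbLabel] at hi
    | succ i =>
      cases j using Fin.cases with
      | zero => simp [perturbLabel] at hj
      | succ j => exact heq i j

lemma perturbedLimit_eq (hw : ∀ i, 0 < w i) (heq : IsEquilibrium xbar) (hδ : 0 < δ)
    (hwin : IsPerturbationWindow xbar c y lo hi) {T : ℕ}
    (hT : IsEquilibrium (wKrauseTraj (reducedWeight δ w xbar c) (Matrix.vecCons y c) T))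
    (i : Fin n) :
    perturbedLimit w xbar y δ i = overwrite (perturbLabel c xbar) (Fin.cons y xbar)
      (wKrauseTraj (reducedWeight δ w xbar c) (Matrix.vecCons y c) T) i.succ := by
  have hlump := lumpWeight_perturbLabel hwin.injective δ (w := w) (xbar := xbar)
  have hw' : ∀ j, 0 < (Fin.cons δ w : Fin (n + 1) → ℝ) j := Fin.cases hδ hw
  have hW := hwin.reducedWeight_pos hw hδ
  rw [← hlump] at hT hW
  have h := tendsto_wKrauseTraj_overwrite hw' hW (hwin.isFrozenOutside heq) hwin.vecCons_mem
    hT i.succ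
  rw [overwrite_perturbLabel hwin.injective, hlump] at h
  exact h.limUnder_eq

lemma abs_sub_perturbedLimit_le (hw : ∀ i, 0 < w i) (heq : IsEquilibrium xbar) (hδ : 0 < δ)
    (hwin : IsPerturbationWindow xbar c y lo hi) {T : ℕ}
    (hT : IsEquilibrium (wKrauseTraj (reducedWeight δ w xbar c) (Matrix.vecCons y c) T))
    (i : Fin n) : |xbar i - perturbedLimit w xbar y δ i| ≤ hi - lo := by
  rw [perturbedLimit_eq hw heq hδ hwin hT, overwrite]
  cases h : perturbLabel c xbar i.succ with
  | none => simpa using sub_nonneg.2 (hwin.perturber_mem.1.trans hwin.perturber_mem.2)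
  | some q =>
    cases q using Fin.cases with
    | zero => exact absurd h (perturbLabel_succ_ne_some_zero i)
    | succ q =>
      rw [Option.elim_some, (perturbLabel_succ_eq_some_succ hwin.injective i q).1 h,
        ← Real.dist_eq]
      exact Real.dist_le_of_mem_Icc (hwin.cluster_mem q)
        (wKrauseTraj_mem_Icc (hwin.reducedWeight_pos hw hδ) hwin.vecCons_mem T q.succ)

lemma perturbDelta_eq (hw : ∀ i, 0 < w i) (heq : IsEquilibrium xbar) (hδ : 0 < δ)
    (hwin : IsPerturbationWindow xbar c y lo hi) {T : ℕ}
    (hT : IsEquilibrium (wKrauseTraj (reducedWeight δ w xbar c) (Matrix.vecCons y c) T)) :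
    perturbDelta w xbar y δ = ∑ q, clusterWeight w xbar (c q) *
      |c q - wKrauseTraj (reducedWeight δ w xbar c) (Matrix.vecCons y c) T q.succ| := by
  simp only [perturbDelta, perturbedLimit_eq hw heq hδ hwin hT, overwrite, perturbLabel,
    Fin.cons_succ]
  rw [← sum_fiberwise Finset.univ (fun i => Function.partialInv c (xbar i)),
    Fintype.sum_option, sum_eq_zero fun i hi => by simp [(mem_filter.1 hi).2], zero_add]
  refine sum_congr rfl fun q _ => ?_
  rw [clusterWeight, sum_mul]
  refine sum_congr (filter_congr fun i _ => (hwin.injective.isPartialInv q _).trans eq_comm)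
    fun i hi => ?_
  rw [(mem_filter.1 hi).2]
  simp [Function.partialInv_left hwin.injective]

end Perturbation

lemma exists_iterate_of_contracting {X : Type*} {f : X → X} {P Q : X → Prop} (V : X → ℝ)
    {θ : ℝ} (hθ : θ ∈ Set.Ico 0 1) (hsmall : ∀ x, P x → V x < 1 → Q (f x))
    (hstep : ∀ x, P x → 1 ≤ V x → Q (f x) ∨ (P (f x) ∧ V (f x) ≤ θ * V x))
    {x : X} (hx : P x) : ∃ t, Q (f^[t] x) := by
  obtain ⟨N, hN⟩ : ∃ N : ℕ, V x * θ ^ N < 1 := by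
    have h := (tendsto_pow_atTop_nhds_zero_of_lt_one hθ.1 hθ.2).const_mul (V x)
    rw [mul_zero] at h
    exact (h.eventually_lt_const one_pos).exists
  induction N generalizing x with
  | zero => exact ⟨1, hsmall x hx (by simpa using hN)⟩
  | succ N ih =>
    by_cases hV : V x < 1
    · exact ⟨1, hsmall x hx hV⟩
    rcases hstep x hx (not_lt.1 hV) with hQ | ⟨hP, hle⟩
    · exact ⟨1, hQ⟩
    have hθN : 0 ≤ θ ^ N := pow_nonneg hθ.1 N
    obtain ⟨t, ht⟩ := ih hP (by
      calc V (f x) * θ ^ N ≤ θ * V x * θ ^ N := by gcongr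
        _ = V x * θ ^ (N + 1) := by ring
        _ < 1 := hN)
    exact ⟨t + 1, ht⟩

section ThreeAgents

variable {W : Fin 3 → ℝ} {y α β : ℝ}

lemma wKrauseUpdate_three_of_gap (hu : y - α < 1) (hv : β - y < 1) (hgap : 1 ≤ β - α) :
    wKrauseUpdate W ![y, α, β] = ![(W 0 * y + W 1 * α + W 2 * β) / (W 0 + W 1 + W 2),
      (W 0 * y + W 1 * α) / (W 0 + W 1), (W 0 * y + W 2 * β) / (W 0 + W 2)] := by
  have h1 : |y - α| < 1 := by rw [abs_lt]; constructor <;> linarith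
  have h2 : |y - β| < 1 := by rw [abs_lt]; constructor <;> linarith
  have h3 : ¬ |α - β| < 1 := by rw [abs_lt]; intro h; linarith [h.1]
  ext i
  rw [wKrauseUpdate, sum_filter, sum_filter]
  fin_cases i <;> simp [Fin.sum_univ_three, h1, h2, h3,
    abs_sub_comm α y, abs_sub_comm β y, abs_sub_comm β α]

lemma wKrauseUpdate_three_ordered_of_gap (hW : ∀ i, 0 < W i) (hu : y - α < 1)
    (hv : β - y < 1) (hgap : 1 ≤ β - α) :
    α ≤ wKrauseUpdate W ![y, α, β] 1 ∧
      wKrauseUpdate W ![y, α, β] 1 ≤ wKrauseUpdate W ![y, α, β] 0 ∧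
      wKrauseUpdate W ![y, α, β] 0 ≤ wKrauseUpdate W ![y, α, β] 2 ∧
      wKrauseUpdate W ![y, α, β] 2 ≤ β := by
  rw [wKrauseUpdate_three_of_gap hu hv hgap]
  simp only [Fin.isValue, Matrix.cons_val_zero, Matrix.cons_val_one, Matrix.cons_val]
  have h0 := hW 0
  have h1 := hW 1
  have h2 := hW 2
  refine ⟨?_, ?_, ?_, ?_⟩
  · rw [le_div_iff₀ (by positivity)]; nlinarith
  · rw [div_le_div_iff₀ (by positivity) (by positivity)]
    nlinarith [mul_pos h0 h2, mul_pos h1 h2]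
  · rw [div_le_div_iff₀ (by positivity) (by positivity)]
    nlinarith [mul_pos h0 h1, mul_pos h1 h2]
  · rw [div_le_iff₀ (by positivity)]; nlinarith

lemma wKrauseUpdate_three_gap_le (hW : ∀ i, 0 < W i) (hu : y - α < 1) (hv : β - y < 1)
    (hgap : 1 ≤ β - α) :
    wKrauseUpdate W ![y, α, β] 2 - wKrauseUpdate W ![y, α, β] 1 ≤
      (W 1 + W 2) / (W 0 + W 1 + W 2) * (β - α) := by
  rw [wKrauseUpdate_three_of_gap hu hv hgap]
  simp only [Fin.isValue, Matrix.cons_val_one, Matrix.cons_val]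
  have h0 := hW 0
  have h1 := hW 1
  have h2 := hW 2
  have hαy : 0 ≤ y - α := by linarith
  have hyβ : 0 ≤ β - y := by linarith
  rw [div_sub_div _ _ (by positivity) (by positivity), div_mul_eq_mul_div,
    div_le_div_iff₀ (by positivity) (by positivity)]
  -- the two sides differ by `W₀² (W₁ (β - y) + W₂ (y - α)) + W₀ (W₁² (β - y) + W₂² (y - α))`
  nlinarith [mul_nonneg (mul_nonneg h0.le h0.le) (mul_nonneg h1.le hyβ),
    mul_nonneg (mul_nonneg h0.le h0.le) (mul_nonneg h2.le hαy),
    mul_nonneg (mul_nonneg h0.le h1.le) (mul_nonneg h1.le hyβ),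
    mul_nonneg (mul_nonneg h0.le h2.le) (mul_nonneg h2.le hαy)]

lemma wKrauseUpdate_three_near_of_gap (hW : ∀ i, 0 < W i) (hu : y - α < 1) (hv : β - y < 1)
    (hgap : 1 ≤ β - α) (hW1 : W 1 * (β - α) ≤ W 1 + W 2)
    (hW2 : W 2 * (β - α) ≤ W 1 + W 2) :
    wKrauseUpdate W ![y, α, β] 0 - α < 1 ∧ β - wKrauseUpdate W ![y, α, β] 0 < 1 := by
  rw [wKrauseUpdate_three_of_gap hu hv hgap]
  simp only [Fin.isValue, Matrix.cons_val_zero]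
  have h0 := hW 0
  have h1 := hW 1
  have h2 := hW 2
  constructor
  · rw [sub_lt_iff_lt_add, div_lt_iff₀ (by positivity)]; nlinarith
  · rw [sub_lt_comm, lt_div_iff₀ (by positivity)]; nlinarith

lemma isEquilibrium_wKrauseUpdate_three_of_left_far (hW : ∀ i, 0 < W i) (hu : 1 ≤ y - α)
    (hv : β - y < 1) (hyβ : y ≤ β) : IsEquilibrium (wKrauseUpdate W ![y, α, β]) := by
  have h1 : ¬ |y - α| < 1 := by rw [abs_lt]; intro h; linarith [h.2]
  have h2 : |y - β| < 1 := by rw [abs_lt]; constructor <;> linarith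
  have h3 : ¬ |α - β| < 1 := by rw [abs_lt]; intro h; linarith [h.1]
  have hupdate : wKrauseUpdate W ![y, α, β] = ![(W 0 * y + W 2 * β) / (W 0 + W 2), α,
      (W 0 * y + W 2 * β) / (W 0 + W 2)] := by
    ext i
    rw [wKrauseUpdate, sum_filter, sum_filter]
    fin_cases i <;> simp [Fin.sum_univ_three, h1, h2, h3, (hW 1).ne',
      abs_sub_comm α y, abs_sub_comm β y, abs_sub_comm β α]
  have hy : y ≤ (W 0 * y + W 2 * β) / (W 0 + W 2) := by
    rw [le_div_iff₀ (by linarith [hW 0, hW 2])]; nlinarith [hW 2]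
  rw [hupdate]
  refine isEquilibrium_of_forall_eq_or_eq (u := (W 0 * y + W 2 * β) / (W 0 + W 2)) (v := α)
    (fun i => by fin_cases i <;> simp) ?_
  rw [abs_of_nonneg (by linarith)]
  linarith

lemma isEquilibrium_wKrauseUpdate_three_of_right_far (hW : ∀ i, 0 < W i) (hu : y - α < 1)
    (hv : 1 ≤ β - y) (hαy : α ≤ y) : IsEquilibrium (wKrauseUpdate W ![y, α, β]) := by
  have h1 : |y - α| < 1 := by rw [abs_lt]; constructor <;> linarith
  have h2 : ¬ |y - β| < 1 := by rw [abs_lt]; intro h; linarith [h.1]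
  have h3 : ¬ |α - β| < 1 := by rw [abs_lt]; intro h; linarith [h.1]
  have hupdate : wKrauseUpdate W ![y, α, β] = ![(W 0 * y + W 1 * α) / (W 0 + W 1),
      (W 0 * y + W 1 * α) / (W 0 + W 1), β] := by
    ext i
    rw [wKrauseUpdate, sum_filter, sum_filter]
    fin_cases i <;> simp [Fin.sum_univ_three, h1, h2, h3, (hW 2).ne',
      abs_sub_comm α y, abs_sub_comm β y, abs_sub_comm β α]
  have hy : (W 0 * y + W 1 * α) / (W 0 + W 1) ≤ y := by
    rw [div_le_iff₀ (by linarith [hW 0, hW 1])]; nlinarith [hW 1]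
  rw [hupdate]
  refine isEquilibrium_of_forall_eq_or_eq (u := (W 0 * y + W 1 * α) / (W 0 + W 1)) (v := β)
    (fun i => by fin_cases i <;> simp) ?_
  rw [abs_of_nonpos (by linarith)]
  linarith

lemma gap_ratio_mem_Ico (hW : ∀ i, 0 < W i) :
    (W 1 + W 2) / (W 0 + W 1 + W 2) ∈ Set.Ico 0 1 := by
  have h0 := hW 0
  have h1 := hW 1
  have h2 := hW 2
  exact ⟨by positivity, (div_lt_one (by positivity)).2 (by linarith)⟩

lemma forall_mem_Icc_of_three {z : Fin 3 → ℝ} (h1 : z 1 ≤ z 0) (h2 : z 0 ≤ z 2) :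
    ∀ i, z i ∈ Icc (z 1) (z 2) := by
  intro i
  fin_cases i <;> simp [h1, h2, h1.trans h2]

lemma exists_isEquilibrium_wKrauseTraj_three (hW : ∀ i, 0 < W i) (hαy : α ≤ y)
    (hyβ : y ≤ β) (hβα : β - α < 2) :
    ∃ T, IsEquilibrium (wKrauseTraj W ![y, α, β] T) := by
  refine exists_iterate_of_contracting (P := fun z => z 1 ≤ z 0 ∧ z 0 ≤ z 2 ∧ z 2 - z 1 < 2)
    (fun z => z 2 - z 1) (gap_ratio_mem_Ico hW) ?_ ?_ ⟨hαy, hyβ, hβα⟩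
  · rintro z ⟨h1, h2, -⟩ hV
    rw [wKrauseUpdate_eq_const_of_mem_Icc (forall_mem_Icc_of_three h1 h2) hV]
    exact isEquilibrium_const _
  · rintro z ⟨h1, h2, h3⟩ hV
    obtain ⟨y₀, α₀, β₀, rfl⟩ : ∃ y₀ α₀ β₀, z = ![y₀, α₀, β₀] :=
      ⟨z 0, z 1, z 2, (FinVec.etaExpand_eq z).symm⟩
    simp only [Fin.isValue, Matrix.cons_val_zero, Matrix.cons_val_one, Matrix.cons_val]
      at h1 h2 h3 hV
    rcases le_or_gt 1 (y₀ - α₀) with hu | hu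
    · exact .inl (isEquilibrium_wKrauseUpdate_three_of_left_far hW hu (by linarith) h2)
    rcases le_or_gt 1 (β₀ - y₀) with hv | hv
    · exact .inl (isEquilibrium_wKrauseUpdate_three_of_right_far hW hu hv h1)
    obtain ⟨h4, h5, h6, h7⟩ := wKrauseUpdate_three_ordered_of_gap hW hu hv hV
    exact .inr ⟨⟨h5, h6, by linarith⟩, wKrauseUpdate_three_gap_le hW hu hv hV⟩

lemma exists_wKrauseTraj_three_eq_const (hW : ∀ i, 0 < W i) (hαy : α ≤ y) (hyβ : y ≤ β)
    (hu : y - α < 1) (hv : β - y < 1) (hW1 : W 1 * (β - α) ≤ W 1 + W 2)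
    (hW2 : W 2 * (β - α) ≤ W 1 + W 2) :
    ∃ T g, wKrauseTraj W ![y, α, β] T = fun _ => g := by
  refine exists_iterate_of_contracting (Q := fun z => ∃ g, z = fun _ => g)
    (P := fun z => z 1 ≤ z 0 ∧ z 0 ≤ z 2 ∧ z 0 - z 1 < 1 ∧ z 2 - z 0 < 1 ∧
      W 1 * (z 2 - z 1) ≤ W 1 + W 2 ∧ W 2 * (z 2 - z 1) ≤ W 1 + W 2)
    (fun z => z 2 - z 1) (gap_ratio_mem_Ico hW) ?_ ?_ ⟨hαy, hyβ, hu, hv, hW1, hW2⟩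
  · rintro z ⟨h1, h2, -⟩ hV
    exact ⟨_, wKrauseUpdate_eq_const_of_mem_Icc (forall_mem_Icc_of_three h1 h2) hV⟩
  · rintro z ⟨-, -, hu, hv, hW1, hW2⟩ hV
    obtain ⟨y₀, α₀, β₀, rfl⟩ : ∃ y₀ α₀ β₀, z = ![y₀, α₀, β₀] :=
      ⟨z 0, z 1, z 2, (FinVec.etaExpand_eq z).symm⟩
    simp only [Fin.isValue, Matrix.cons_val_zero, Matrix.cons_val_one, Matrix.cons_val]
      at hu hv hW1 hW2 hV
    obtain ⟨h1, h2, h3, h4⟩ := wKrauseUpdate_three_ordered_of_gap hW hu hv hV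
    obtain ⟨h5, h6⟩ := wKrauseUpdate_three_near_of_gap hW hu hv hV hW1 hW2
    exact .inr ⟨⟨h2, h3, by linarith, by linarith, by nlinarith [hW 1], by nlinarith [hW 2]⟩,
      wKrauseUpdate_three_gap_le hW hu hv hV⟩

end ThreeAgents

section Windows

lemma one_le_abs_sub_of_mem_Icc {e lo hi u : ℝ} (h : hi - lo < 2) (hlo : 1 ≤ |lo - e|)
    (hhi : 1 ≤ |hi - e|) (hu : u ∈ Icc lo hi) : 1 ≤ |u - e| := by
  rw [le_abs'] at hlo hhi ⊢
  rcases hlo with hlo | hlo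
  · rcases hhi with hhi | hhi
    · exact .inl (by linarith [hu.2])
    · linarith
  · exact .inr (by linarith [hu.1])

variable {n : ℕ} {w xbar : Fin n → ℝ} {y δ : ℝ}

lemma isPerturbationWindow_empty (hfar : ∀ i, 1 ≤ |y - xbar i|) :
    IsPerturbationWindow xbar ![] y y y where
  injective := Function.injective_of_subsingleton _
  isCluster q := q.elim0
  perturber_mem := ⟨le_rfl, le_rfl⟩
  cluster_mem q := q.elim0
  far i _ u hu := by rw [le_antisymm hu.2 hu.1]; exact hfar i

lemma isPerturbationWindow_single (heq : IsEquilibrium xbar) {v : ℝ} (hv : ∃ j, xbar j = v)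
    (hyv : |y - v| < 1) (hfar : ∀ i, xbar i ≠ v → 1 ≤ |y - xbar i|) :
    IsPerturbationWindow xbar ![v] y (min y v) (max y v) where
  injective := Function.injective_of_subsingleton _
  isCluster _ := by simpa using hv
  perturber_mem := ⟨min_le_left _ _, le_max_left _ _⟩
  cluster_mem _ := by simp
  far i hi u hu := by
    have hiv : xbar i ≠ v := by simpa [eq_comm] using hi 0
    obtain ⟨j, rfl⟩ := hv
    have hvi : 1 ≤ |xbar j - xbar i| := (heq j i).resolve_left (Ne.symm hiv)
    refine one_le_abs_sub_of_mem_Icc (by rw [max_sub_min_eq_abs']; linarith) ?_ ?_ hu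
    · rcases min_choice y (xbar j) with h | h <;> rw [h]
      exacts [hfar i hiv, hvi]
    · rcases max_choice y (xbar j) with h | h <;> rw [h]
      exacts [hfar i hiv, hvi]

lemma isPerturbationWindow_pair (heq : IsEquilibrium xbar) {a b : ℝ} (ha : ∃ i, xbar i = a)
    (hb : ∃ i, xbar i = b) (hab : a < b) (hba : b - a < 2) (hy : y ∈ Icc a b) :
    IsPerturbationWindow xbar ![a, b] y a b where
  injective p q := by fin_cases p <;> fin_cases q <;> simp [hab.ne, hab.ne']
  isCluster q := by fin_cases q <;> simpa
  perturber_mem := hy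
  cluster_mem q := by fin_cases q <;> simp [hab.le]
  far i hi u hu := by
    obtain ⟨ia, rfl⟩ := ha
    obtain ⟨ib, rfl⟩ := hb
    exact one_le_abs_sub_of_mem_Icc hba ((heq ia i).resolve_left (by simpa using hi 0))
      ((heq ib i).resolve_left (by simpa using hi 1)) hu

lemma perturbedLimit_of_sees_none (hw : ∀ i, 0 < w i) (heq : IsEquilibrium xbar)
    (hδ : 0 < δ) (hfar : ∀ i, 1 ≤ |y - xbar i|) (i : Fin n) :
    perturbedLimit w xbar y δ i = xbar i := by
  have h := abs_sub_perturbedLimit_le hw heq hδ (isPerturbationWindow_empty hfar) (T := 0)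
    (fun p q => .inl (congrArg _ (Subsingleton.elim (α := Fin 1) p q))) i
  rw [sub_self, abs_nonpos_iff, sub_eq_zero] at h
  exact h.symm

lemma abs_sub_perturbedLimit_le_one_of_sees_one (hw : ∀ i, 0 < w i) (heq : IsEquilibrium xbar)
    (hδ : 0 < δ) {v : ℝ} (hv : ∃ j, xbar j = v) (hyv : |y - v| < 1)
    (hfar : ∀ i, xbar i ≠ v → 1 ≤ |y - xbar i|) (i : Fin n) :
    |xbar i - perturbedLimit w xbar y δ i| ≤ 1 := by
  have hwin := isPerturbationWindow_single heq hv hyv hfar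
  have hT : IsEquilibrium (wKrauseTraj (reducedWeight δ w xbar ![v]) ![y, v] 1) := by
    rw [wKrauseTraj, Function.iterate_one, wKrauseUpdate_eq_const_of_mem_Icc hwin.vecCons_mem
      (by rwa [max_sub_min_eq_abs'])]
    exact isEquilibrium_const _
  have h := abs_sub_perturbedLimit_le hw heq hδ hwin hT i
  rw [max_sub_min_eq_abs'] at h
  linarith

lemma abs_sub_perturbedLimit_le_two_of_sees_two (hw : ∀ i, 0 < w i) (heq : IsEquilibrium xbar)
    (hδ : 0 < δ) {a b : ℝ} (ha : ∃ i, xbar i = a) (hb : ∃ i, xbar i = b) (hab : a < b)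
    (hya : |y - a| < 1) (hyb : |y - b| < 1) (i : Fin n) :
    |xbar i - perturbedLimit w xbar y δ i| ≤ 2 := by
  rw [abs_lt] at hya hyb
  have hgap : 1 ≤ b - a := by
    obtain ⟨ia, rfl⟩ := ha
    obtain ⟨ib, rfl⟩ := hb
    simpa [abs_of_neg (sub_neg.2 hab)] using (heq ia ib).resolve_left hab.ne
  have hay : a ≤ y := by linarith
  have hyb' : y ≤ b := by linarith
  have hwin := isPerturbationWindow_pair heq ha hb hab (by linarith) ⟨hay, hyb'⟩
  obtain ⟨T, hT⟩ := exists_isEquilibrium_wKrauseTraj_three (hwin.reducedWeight_pos hw hδ)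
    hay hyb' (by linarith)
  have h := abs_sub_perturbedLimit_le hw heq hδ hwin hT i
  linarith

end Windows

section Instability

variable {n : ℕ} {w xbar : Fin n → ℝ} {δ : ℝ}

lemma abs_sub_perturbedLimit_le_two (hw : ∀ i, 0 < w i) (heq : IsEquilibrium xbar)
    (hδ : 0 < δ) (y : ℝ) (i : Fin n) : |xbar i - perturbedLimit w xbar y δ i| ≤ 2 := by
  by_cases htwo : ∃ j k, xbar j < xbar k ∧ |y - xbar j| < 1 ∧ |y - xbar k| < 1
  · obtain ⟨j, k, hjk, hj, hk⟩ := htwo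
    exact abs_sub_perturbedLimit_le_two_of_sees_two hw heq hδ ⟨j, rfl⟩ ⟨k, rfl⟩ hjk hj hk i
  by_cases hone : ∃ j, |y - xbar j| < 1
  · obtain ⟨j, hj⟩ := hone
    refine (abs_sub_perturbedLimit_le_one_of_sees_one hw heq hδ ⟨j, rfl⟩ hj
      (fun k hk => not_lt.1 fun hk' => htwo ?_) i).trans one_le_two
    rcases hk.lt_or_gt with hlt | hlt
    exacts [⟨k, j, hlt, hk', hj⟩, ⟨j, k, hlt, hj, hk'⟩]
  push Not at hone
  simp [perturbedLimit_of_sees_none hw heq hδ hone i]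

lemma perturbDelta_le (hw : ∀ i, 0 < w i) (heq : IsEquilibrium xbar) (hδ : 0 < δ) (y : ℝ) :
    perturbDelta w xbar y δ ≤ ∑ i, w i * 2 :=
  sum_le_sum fun i _ => mul_le_mul_of_nonneg_left
    (abs_sub_perturbedLimit_le_two hw heq hδ y i) (hw i).le

lemma min_mul_le_perturbDelta_midpoint (hw : ∀ i, 0 < w i) (heq : IsEquilibrium xbar)
    (hδ : 0 < δ) {a b : ℝ} (ha : ∃ i, xbar i = a) (hb : ∃ i, xbar i = b) (hab : a < b)
    (hba : b - a < 2)
    (hmax : max (clusterWeight w xbar a) (clusterWeight w xbar b) * (b - a) ≤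
      clusterWeight w xbar a + clusterWeight w xbar b) :
    min (clusterWeight w xbar a) (clusterWeight w xbar b) * (b - a) ≤
      perturbDelta w xbar ((a + b) / 2) δ := by
  have hwin := isPerturbationWindow_pair heq ha hb hab hba
    (y := (a + b) / 2) ⟨by linarith, by linarith⟩
  have hW := hwin.reducedWeight_pos hw hδ
  obtain ⟨T, g, hTg⟩ := exists_wKrauseTraj_three_eq_const hW
    (y := (a + b) / 2) (α := a) (β := b) (by linarith) (by linarith) (by linarith)
    (by linarith) ((mul_le_mul_of_nonneg_right (le_max_left _ _) (by linarith)).trans hmax)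
    ((mul_le_mul_of_nonneg_right (le_max_right _ _) (by linarith)).trans hmax)
  have hT : IsEquilibrium
      (wKrauseTraj (reducedWeight δ w xbar ![a, b]) ![(a + b) / 2, a, b] T) := by
    rw [hTg]
    exact isEquilibrium_const g
  have hg : g ∈ Icc a b := by simpa [hTg] using wKrauseTraj_mem_Icc hW hwin.vecCons_mem T 0
  rw [perturbDelta_eq hw heq hδ hwin hT, hTg]
  simp only [Fin.sum_univ_two, Matrix.cons_val_zero, Matrix.cons_val_one, Matrix.cons_val_fin_one]
  rw [abs_sub_comm, abs_of_nonneg (sub_nonneg.2 hg.1), abs_of_nonneg (sub_nonneg.2 hg.2)]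
  nlinarith [min_le_left (clusterWeight w xbar a) (clusterWeight w xbar b),
    min_le_right (clusterWeight w xbar a) (clusterWeight w xbar b), hg.1, hg.2]

/- In `ℝ`, `⨆` of a family that is not bounded above is `0`, so the lower bound at the midpoint
only bounds the supremum thanks to `perturbDelta_le`. -/
lemma not_isStableEquilibrium_of_close_clusters (hw : ∀ i, 0 < w i) (heq : IsEquilibrium xbar)
    {a b : ℝ} (ha : ∃ i, xbar i = a) (hb : ∃ i, xbar i = b) (hab : a ≠ b)
    (hab2 : |a - b| < 2)
    (hmax : max (clusterWeight w xbar a) (clusterWeight w xbar b) * |a - b| ≤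
      clusterWeight w xbar a + clusterWeight w xbar b) :
    ¬ IsStableEquilibrium w xbar := by
  wlog hlt : a < b generalizing a b
  · refine this hb ha hab.symm (by rwa [abs_sub_comm]) ?_ (hab.lt_or_gt.resolve_left hlt)
    rwa [max_comm, add_comm, abs_sub_comm]
  rw [abs_of_neg (sub_neg.2 hlt), neg_sub] at hab2 hmax
  intro hstab
  have hpos : 0 < min (clusterWeight w xbar a) (clusterWeight w xbar b) * (b - a) :=
    mul_pos (lt_min (clusterWeight_pos hw ha) (clusterWeight_pos hw hb)) (sub_pos.2 hlt)
  obtain ⟨δ, hsup, hδ⟩ := ((hstab.eventually_lt_const hpos).and self_mem_nhdsWithin).exists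
  have hbdd : BddAbove (Set.range fun y => perturbDelta w xbar y δ) :=
    ⟨_, Set.forall_mem_range.2 (perturbDelta_le hw heq hδ)⟩
  exact (le_ciSup_of_le hbdd _
    (min_mul_le_perturbDelta_midpoint hw heq hδ ha hb hlt hab2 hmax)).not_gt hsup

end Instability

end WKrause

open WKrause

/-- If an equilibrium of the weighted Krause model is stable with
respect to the addition of a perturbing agent, then every pair of distinct
clusters satisfies the inter-cluster distance condition. -/
theorem krause_stability_necessary {n : ℕ} (w : Fin n → ℝ) (hw : ∀ i, 0 < w i)
    (xbar : Fin n → ℝ)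
    (heq : ∀ i j : Fin n, xbar i = xbar j ∨ 1 ≤ |xbar i - xbar j|)
    (hstab : IsStableEquilibrium w xbar) :
    ∀ a b : ℝ, (∃ i, xbar i = a) → (∃ j, xbar j = b) → a ≠ b →
      (clusterWeight w xbar a = clusterWeight w xbar b ∧ 2 ≤ |a - b|) ∨
      (clusterWeight w xbar a ≠ clusterWeight w xbar b ∧
        1 + min (clusterWeight w xbar a) (clusterWeight w xbar b) /
            max (clusterWeight w xbar a) (clusterWeight w xbar b) < |a - b|) := by
  intro a b ha hb hab
  set Wa := clusterWeight w xbar a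
  set Wb := clusterWeight w xbar b
  have hWa : 0 < Wa := clusterWeight_pos hw ha
  have hsep : |a - b| < 2 → Wa + Wb < max Wa Wb * |a - b| := fun h2 =>
    not_le.1 fun hmax => not_isStableEquilibrium_of_close_clusters hw heq ha hb hab h2 hmax hstab
  rcases eq_or_ne Wa Wb with hW | hW
  · refine .inl ⟨hW, not_lt.1 fun h2 => ?_⟩
    have := hsep h2
    rw [hW, max_self] at this
    nlinarith
  · refine .inr ⟨hW, ?_⟩
    have hmax : 0 < max Wa Wb := lt_max_of_lt_left hWa
    rw [← div_self hmax.ne', ← add_div, max_add_min, div_lt_iff₀ hmax, mul_comm]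
    rcases lt_or_ge |a - b| 2 with h2 | h2
    · exact hsep h2
    · nlinarith [min_lt_max.2 hW, min_add_max Wa Wb]
end

section
/- Fix L > 0. For every ε > 0 there exists δ > 0 such that for every measurable x : [0,1] → [0,L]: if λ({α ∈ [0,1] : |(L_x x)(α)| ≥ δ}) < δ, then there exists s ∈ F with λ({α ∈ [0,1] : |x(α) − s(α)| ≥ ε}) < ε. In particular, if (L_x x)(α) = 0 for almost every α, then x agrees almost everywhere with some element of F. -/
/-!
Write `ν` for Lebesgue measure on `[0,1]` and `μ = x_* ν` for the distribution of the opinions.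
Since `χ_x(α,β) (x α - x β)` is antisymmetric in `(α, β)`, one has the energy identity
`∫∫ χ_x (x α - x β)² = 2 ∫ x · L_x x ≤ 2 L ∫ |L_x x|`. So when `L_x x` is small, `μ ⊗ μ` gives
little mass to pairs at distance in `[a, 1)`. Cut `[0, L]` into cells of width `1/K` and choose
heavy cells greedily from the left, each at least `1` beyond the previous one. A heavy cell and the
band right of it up to distance `1` form such medium pairs, so the bands are light, and `μ` is
concentrated within `3/K` of the chosen 1-separated set `D`. Rounding `x` to `D` by a monotone step
function gives `s`. If `L_x x = 0` a.e. the energy vanishes, so the support of `μ` is 1-separated,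
hence finite, and `x` takes its values in it almost everywhere.
-/

open MeasureTheory

/-- Indicator of the connectivity: `χ_x(α,β) = 1` iff `|x α - x β| < 1`. -/
noncomputable def chiFn (x : ℝ → ℝ) (α β : ℝ) : ℝ :=
  if |x α - x β| < 1 then 1 else 0

/-- The Laplacian applied to the opinion function itself:
`(L_x x)(α) = (∫ χ_x(α,β) dβ)·x(α) − ∫ χ_x(α,β) x(β) dβ`. -/
noncomputable def lapFn (x : ℝ → ℝ) (α : ℝ) : ℝ :=
  (∫ β in Set.Icc (0 : ℝ) 1, chiFn x α β) * x α -
    ∫ β in Set.Icc (0 : ℝ) 1, chiFn x α β * x β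

/-- `F`: measurable functions `[0,1] → [0,L]` whose values on `[0,1]` are
pairwise either equal or at distance at least 1. -/
def Fset (L : ℝ) : Set (ℝ → ℝ) :=
  {s | Measurable s ∧ (∀ α ∈ Set.Icc (0 : ℝ) 1, s α ∈ Set.Icc (0 : ℝ) L) ∧
    ∀ α ∈ Set.Icc (0 : ℝ) 1, ∀ β ∈ Set.Icc (0 : ℝ) 1,
      s α = s β ∨ 1 ≤ |s α - s β|}

open Set

local notation "ν" => volume.restrict (Icc (0 : ℝ) 1)

instance : IsProbabilityMeasure ν := ⟨by simp⟩

lemma abs_le_of_mem_Icc_zero {v L : ℝ} (h : v ∈ Icc 0 L) : |v| ≤ L :=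
  (abs_of_nonneg h.1).trans_le h.2

lemma integrable_of_abs_le {Ω : Type*} [MeasurableSpace Ω] {μ : Measure Ω} [IsFiniteMeasure μ]
    {f : Ω → ℝ} (hf : Measurable f) {C : ℝ} (hC : ∀ ω, |f ω| ≤ C) : Integrable f μ :=
  .of_bound hf.aestronglyMeasurable C (.of_forall hC)

lemma integral_abs_le_add_measureReal {Ω : Type*} [MeasurableSpace Ω] {μ : Measure Ω}
    [IsProbabilityMeasure μ] {f : Ω → ℝ} (hf : Measurable f) (hf1 : ∀ ω, |f ω| ≤ 1)
    {δ : ℝ} (hδ : 0 ≤ δ) : ∫ ω, |f ω| ∂μ ≤ δ + μ.real {ω | δ ≤ |f ω|} := by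
  have hS : MeasurableSet {ω | δ ≤ |f ω|} := measurableSet_le measurable_const hf.abs
  have hind : Integrable ({ω | δ ≤ |f ω|}.indicator 1) μ :=
    (integrable_const (1 : ℝ)).indicator hS
  calc ∫ ω, |f ω| ∂μ ≤ ∫ ω, (δ + {ω | δ ≤ |f ω|}.indicator 1 ω) ∂μ := by
        refine integral_mono (integrable_of_abs_le hf.abs fun ω => by simpa using hf1 ω)
          ((integrable_const δ).add hind) fun ω => ?_
        by_cases hω : δ ≤ |f ω|
        · rw [indicator_of_mem (show ω ∈ {ω | δ ≤ |f ω|} from hω), Pi.one_apply]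
          linarith [hf1 ω]
        · rw [indicator_of_notMem (show ω ∉ {ω | δ ≤ |f ω|} from hω)]
          linarith
    _ = δ + μ.real {ω | δ ≤ |f ω|} := by
        rw [integral_add (integrable_const δ) hind, integral_indicator_one hS]; simp

noncomputable def interaction (t : ℝ) : ℝ := if |t| < 1 then t else 0

lemma measurable_interaction : Measurable interaction :=
  Measurable.ite (measurableSet_lt measurable_abs measurable_const) measurable_id measurable_const

lemma abs_interaction_le_one (t : ℝ) : |interaction t| ≤ 1 := by
  unfold interaction; split_ifs with h
  · exact h.le
  · simp

lemma interaction_neg (t : ℝ) : interaction (-t) = -interaction t := by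
  unfold interaction; split_ifs <;> simp_all

lemma chiFn_mul_sub (x : ℝ → ℝ) (α β : ℝ) :
    chiFn x α β * x α - chiFn x α β * x β = interaction (x α - x β) := by
  unfold chiFn interaction; split_ifs <;> ring

lemma abs_chiFn_le_one (x : ℝ → ℝ) (α β : ℝ) : |chiFn x α β| ≤ 1 := by
  unfold chiFn; split_ifs <;> simp

section Laplacian

variable {x : ℝ → ℝ} {L : ℝ}

lemma measurable_chiFn (hx : Measurable x) (α : ℝ) : Measurable (chiFn x α) :=
  Measurable.ite (measurableSet_lt (measurable_const.sub hx).abs measurable_const)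
    measurable_const measurable_const

lemma measurable_interaction_sub (hx : Measurable x) :
    Measurable fun p : ℝ × ℝ => interaction (x p.1 - x p.2) :=
  measurable_interaction.comp ((hx.comp measurable_fst).sub (hx.comp measurable_snd))

lemma lapFn_eq_integral_interaction (hx : Measurable x) (hxL : ∀ v, x v ∈ Icc 0 L) (α : ℝ) :
    lapFn x α = ∫ β, interaction (x α - x β) ∂ν := by
  have h₁ : Integrable (fun β => chiFn x α β * x α) ν :=
    integrable_of_abs_le ((measurable_chiFn hx α).mul_const _) fun β => by
      rw [abs_mul]; exact mul_le_of_le_one_left (abs_nonneg _) (abs_chiFn_le_one x α β)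
  have h₂ : Integrable (fun β => chiFn x α β * x β) ν :=
    integrable_of_abs_le ((measurable_chiFn hx α).mul hx) fun β => by
      rw [abs_mul]
      exact (mul_le_of_le_one_left (abs_nonneg _) (abs_chiFn_le_one x α β)).trans
        (abs_le_of_mem_Icc_zero (hxL β))
  rw [lapFn, ← integral_mul_const, ← integral_sub h₁ h₂]
  simp only [chiFn_mul_sub]

lemma abs_lapFn_le_one (hx : Measurable x) (hxL : ∀ v, x v ∈ Icc 0 L) (α : ℝ) :
    |lapFn x α| ≤ 1 := by
  rw [lapFn_eq_integral_interaction hx hxL, ← Real.norm_eq_abs]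
  simpa using norm_integral_le_of_norm_le_const (μ := ν) (C := 1)
    (.of_forall fun β => (Real.norm_eq_abs _).trans_le (abs_interaction_le_one _))

lemma measurable_lapFn (hx : Measurable x) (hxL : ∀ v, x v ∈ Icc 0 L) :
    Measurable (lapFn x) := by
  simp_rw [funext (lapFn_eq_integral_interaction hx hxL)]
  exact (StronglyMeasurable.integral_prod_right'
    (f := fun p : ℝ × ℝ => interaction (x p.1 - x p.2))
    (measurable_interaction_sub hx).stronglyMeasurable :
      StronglyMeasurable fun α => ∫ β, _ ∂ν).measurable

lemma integral_abs_lapFn_le (hx : Measurable x) (hxL : ∀ v, x v ∈ Icc 0 L) {δ : ℝ} (hδ : 0 ≤ δ)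
    (hbad : ν {α | δ ≤ |lapFn x α|} ≤ ENNReal.ofReal δ) : ∫ α, |lapFn x α| ∂ν ≤ 2 * δ := by
  refine (integral_abs_le_add_measureReal (measurable_lapFn hx hxL) (abs_lapFn_le_one hx hxL)
    hδ).trans ?_
  linarith [measureReal_def ν _ ▸ ENNReal.toReal_le_of_le_ofReal hδ hbad]

end Laplacian

noncomputable def energy (t : ℝ) : ℝ := t * interaction t

lemma measurable_energy_sub : Measurable fun p : ℝ × ℝ => energy (p.1 - p.2) :=
  (measurable_fst.sub measurable_snd).mul (measurable_interaction.comp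
    (measurable_fst.sub measurable_snd))

lemma energy_nonneg (t : ℝ) : 0 ≤ energy t := by
  unfold energy interaction; split_ifs <;> nlinarith

lemma abs_energy_le_one (t : ℝ) : |energy t| ≤ 1 := by
  unfold energy interaction; split_ifs with h
  · rw [abs_mul]; nlinarith [abs_nonneg t]
  · simp

lemma sq_le_energy {a t : ℝ} (ha : 0 ≤ a) (hat : a ≤ |t|) (ht : |t| < 1) :
    a ^ 2 ≤ energy t := by
  rw [energy, interaction, if_pos ht, ← sq, ← sq_abs t]
  exact pow_le_pow_left₀ ha hat 2

lemma energy_ne_zero {t : ℝ} (h0 : 0 < |t|) (h1 : |t| < 1) : energy t ≠ 0 := by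
  rw [energy, interaction, if_pos h1]
  exact mul_ne_zero (abs_pos.1 h0) (abs_pos.1 h0)

section Energy

variable {x : ℝ → ℝ} {L : ℝ}

lemma integral_energy_eq_two_mul_integral_mul_lapFn (hx : Measurable x)
    (hxL : ∀ v, x v ∈ Icc 0 L) :
    ∫ p, energy (x p.1 - x p.2) ∂(Measure.prod ν ν) = 2 * ∫ α, x α * lapFn x α ∂ν := by
  set F : ℝ × ℝ → ℝ := fun p => x p.1 * interaction (x p.1 - x p.2)
  have hF : Integrable F (Measure.prod ν ν) :=
    integrable_of_abs_le ((hx.comp measurable_fst).mul (measurable_interaction_sub hx)) fun p => by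
      rw [abs_mul]
      exact (mul_le_of_le_one_right (abs_nonneg _) (abs_interaction_le_one _)).trans
        (abs_le_of_mem_Icc_zero (hxL _))
  have hsplit : (fun p => energy (x p.1 - x p.2)) = fun p => F p + F p.swap := by
    ext p
    simp only [F, energy, Prod.fst_swap, Prod.snd_swap, ← neg_sub (x p.1), interaction_neg]
    ring
  have hFint : ∫ p, F p ∂(Measure.prod ν ν) = ∫ α, x α * lapFn x α ∂ν := by
    rw [integral_prod F hF]
    simp only [F, integral_const_mul, lapFn_eq_integral_interaction hx hxL]
  rw [hsplit, integral_add hF (hF.swap : Integrable (fun p => F p.swap) _), integral_prod_swap,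
    hFint, two_mul]

lemma integral_energy_map_le (hx : Measurable x) (hxL : ∀ v, x v ∈ Icc 0 L) :
    ∫ p, energy (p.1 - p.2) ∂(Measure.prod (Measure.map x ν) (Measure.map x ν)) ≤
      2 * L * ∫ α, |lapFn x α| ∂ν := by
  have hlap := measurable_lapFn hx hxL
  rw [Measure.map_prod_map _ _ hx hx,
    integral_map (hx.prodMap hx).aemeasurable measurable_energy_sub.aestronglyMeasurable]
  simp only [Prod.map_fst, Prod.map_snd]
  rw [integral_energy_eq_two_mul_integral_mul_lapFn hx hxL, mul_assoc]
  gcongr 2 * ?_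
  rw [← integral_const_mul]
  refine integral_mono (integrable_of_abs_le (C := L) (hx.mul hlap) fun α => ?_)
    ((integrable_of_abs_le hlap.abs fun α => by simpa using abs_lapFn_le_one hx hxL α).const_mul L)
    fun α => (le_abs_self _).trans ?_
  · rw [abs_mul]
    exact (mul_le_of_le_one_right (abs_nonneg _) (abs_lapFn_le_one hx hxL α)).trans
      (abs_le_of_mem_Icc_zero (hxL α))
  · rw [abs_mul]
    exact mul_le_mul_of_nonneg_right (abs_le_of_mem_Icc_zero (hxL α)) (abs_nonneg _)

end Energy

def mediumPairs (a : ℝ) : Set (ℝ × ℝ) := {p | a ≤ |p.1 - p.2| ∧ |p.1 - p.2| < 1}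

section PairMeasure

variable (ρ : Measure (ℝ × ℝ)) [IsFiniteMeasure ρ]

lemma integrable_energy_sub : Integrable (fun p : ℝ × ℝ => energy (p.1 - p.2)) ρ :=
  integrable_of_abs_le measurable_energy_sub fun _ => abs_energy_le_one _

lemma sq_mul_measureReal_mediumPairs_le {a : ℝ} (ha : 0 ≤ a) :
    a ^ 2 * ρ.real (mediumPairs a) ≤ ∫ p, energy (p.1 - p.2) ∂ρ := by
  refine le_trans ?_ (mul_meas_ge_le_integral_of_nonneg (.of_forall fun p => energy_nonneg _)
    (integrable_energy_sub ρ) (a ^ 2))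
  gcongr
  · finiteness
  · exact fun p hp => sq_le_energy ha hp.1 hp.2

lemma measure_closePairs_eq_zero (h : ∫ p, energy (p.1 - p.2) ∂ρ = 0) :
    ρ {p | 0 < |p.1 - p.2| ∧ |p.1 - p.2| < 1} = 0 := by
  rw [integral_eq_zero_iff_of_nonneg (fun p => energy_nonneg _) (integrable_energy_sub ρ)] at h
  exact measure_mono_null (fun p hp => energy_ne_zero hp.1 hp.2) (ae_iff.1 h)

end PairMeasure

open Finset in
lemma exists_separated_subset_covering (H : Finset ℕ) {K : ℕ} (hK : 0 < K) :
    ∃ D ⊆ H, (∀ d ∈ D, ∀ d' ∈ D, d < d' → d + K ≤ d') ∧ ∀ j ∈ H, ∃ d ∈ D, d ≤ j ∧ j < d + K := by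
  induction H using Finset.strongInduction with
  | H H ih =>
  rcases H.eq_empty_or_nonempty with rfl | hne
  · exact ⟨∅, empty_subset _, by simp, by simp⟩
  set d := H.min' hne
  obtain ⟨D, hDH, hsep, hcov⟩ :=
    ih (H.filter (d + K ≤ ·)) (filter_ssubset.2 ⟨d, H.min'_mem hne, by omega⟩)
  have hD : ∀ e ∈ D, d + K ≤ e := fun e he => (mem_filter.1 (hDH he)).2
  refine ⟨insert d D, insert_subset (H.min'_mem hne) (hDH.trans (filter_subset _ _)), ?_, ?_⟩
  · intro a ha b hb hab
    rcases mem_insert.1 ha with rfl | ha <;> rcases mem_insert.1 hb with rfl | hb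
    · omega
    · exact hD b hb
    · linarith [hD a ha]
    · exact hsep a ha b hb hab
  · intro j hj
    by_cases hjd : j < d + K
    · exact ⟨d, mem_insert_self _ _, H.min'_le j hj, hjd⟩
    · obtain ⟨e, he, hej⟩ := hcov j (mem_filter.2 ⟨hj, not_lt.1 hjd⟩)
      exact ⟨e, mem_insert_of_mem he, hej⟩

lemma measure_le_of_prod_subset {α : Type*} [MeasurableSpace α] {μ : Measure α} [SFinite μ]
    {A B : Set α} {S : Set (α × α)} {θ : ENNReal} (hθ0 : θ ≠ 0) (hθ : θ ≠ ⊤) (hAB : A ×ˢ B ⊆ S)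
    (hA : θ ≤ μ A) (hS : μ.prod μ S ≤ θ * θ) : μ B ≤ θ := by
  refine (ENNReal.mul_le_mul_iff_right hθ0 hθ).1 ?_
  calc θ * μ B ≤ μ A * μ B := by gcongr
    _ = μ.prod μ (A ×ˢ B) := (Measure.prod_prod A B).symm
    _ ≤ θ * θ := (measure_mono hAB).trans hS

def gridCell (K j : ℕ) : Set ℝ := Ico (j / K) ((j + 1) / K)

def gridBand (K d : ℕ) : Set ℝ := Ico ((d + 3) / K) (d / K + 1)

lemma gridCell_prod_gridBand_subset {K : ℕ} (hK : 0 < K) (d : ℕ) :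
    gridCell K d ×ˢ gridBand K d ⊆ mediumPairs (2 / K) := by
  rintro p ⟨⟨hp₁, hp₁'⟩, ⟨hp₂, hp₂'⟩⟩
  have hgap : (d + 3 : ℝ) / K - (d + 1) / K = 2 / K := by ring
  have h2 : 0 < (2 : ℝ) / K := by positivity
  change 2 / (K : ℝ) ≤ |p.1 - p.2| ∧ |p.1 - p.2| < 1
  rw [abs_sub_comm, abs_of_nonneg (by linarith)]
  exact ⟨by linarith, by linarith⟩

lemma exists_mem_gridCell_of_far {K : ℕ} (hK : 0 < K) {L v : ℝ} (hv : v ∈ Icc 0 L)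
    {D : Finset ℕ} (hvD : ∀ d ∈ D, 3 / K < |v - d / K|) :
    ∃ j ≤ ⌊L * K⌋₊, v ∈ gridCell K j ∧ ∀ d ∈ D, d ≤ j → j < d + K → v ∈ gridBand K d := by
  have hK' : (0 : ℝ) < K := Nat.cast_pos.2 hK
  set j := ⌊v * K⌋₊
  have hjv : (j : ℝ) / K ≤ v := (div_le_iff₀ hK').2 (Nat.floor_le (by positivity [hv.1]))
  have hvj : v < (j + 1) / K := (lt_div_iff₀ hK').2 (Nat.lt_floor_add_one _)
  refine ⟨j, Nat.floor_le_floor (by gcongr; exact hv.2), ⟨hjv, hvj⟩, fun d hdD hdj hjd => ⟨?_, ?_⟩⟩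
  · have hdv : (d : ℝ) / K ≤ v := le_trans (by gcongr) hjv
    have h3 := hvD d hdD
    rw [abs_of_nonneg (sub_nonneg.2 hdv)] at h3
    rw [add_div]
    linarith
  · have : ((j : ℝ) + 1) / K ≤ d / K + 1 := by
      rw [div_add_one hK'.ne']
      exact div_le_div_of_nonneg_right (by exact_mod_cast hjd) hK'.le
    linarith

lemma one_le_abs_div_sub_div {K a b : ℕ} (hK : 0 < K) (hab : a + K ≤ b) :
    1 ≤ |(a : ℝ) / K - b / K| := by
  have : (a : ℝ) + K ≤ b := by exact_mod_cast hab
  rw [abs_sub_comm, ← sub_div, le_abs, le_div_iff₀ (Nat.cast_pos.2 hK)]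
  left; linarith

lemma measure_far_from_grid_le (μ : Measure ℝ) [SFinite μ] {L : ℝ} (hμL : μ (Icc 0 L)ᶜ = 0)
    {K : ℕ} (hK : 0 < K) {θ : ENNReal} (hθ0 : θ ≠ 0) (hθ : θ ≠ ⊤)
    (hmed : μ.prod μ (mediumPairs (2 / K)) ≤ θ * θ) {D : Finset ℕ}
    (hD : ∀ d ∈ D, d ≤ ⌊L * K⌋₊ ∧ θ ≤ μ (gridCell K d))
    (hcov : ∀ j ≤ ⌊L * K⌋₊, θ ≤ μ (gridCell K j) → ∃ d ∈ D, d ≤ j ∧ j < d + K) :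
    μ {v : ℝ | ∀ d ∈ D, 3 / K < |v - d / K|} ≤ (⌊L * K⌋₊ + 1) * θ := by
  classical
  set M := ⌊L * K⌋₊
  set light := (Finset.range (M + 1)).filter fun j => ¬ θ ≤ μ (gridCell K j)
  have hcover : {v : ℝ | ∀ d ∈ D, 3 / K < |v - d / K|} ⊆
      (Icc 0 L)ᶜ ∪ ((⋃ j ∈ light, gridCell K j) ∪ ⋃ d ∈ D, gridBand K d) := by
    intro v hv
    by_cases hvL : v ∈ Icc 0 L
    swap; · exact Or.inl hvL
    obtain ⟨j, hjM, hvj, hband⟩ := exists_mem_gridCell_of_far hK hvL hv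
    by_cases hj : θ ≤ μ (gridCell K j)
    · obtain ⟨d, hdD, hdj, hjd⟩ := hcov j hjM hj
      exact Or.inr (Or.inr (Set.mem_biUnion (Finset.mem_coe.2 hdD) (hband d hdD hdj hjd)))
    · refine Or.inr (Or.inl (Set.mem_biUnion (Finset.mem_coe.2 (Finset.mem_filter.2 ⟨?_, hj⟩)) hvj))
      exact Finset.mem_range.2 (Nat.lt_succ_of_le hjM)
  have hcard : light.card + D.card ≤ M + 1 := by
    have hDH : D ⊆ (Finset.range (M + 1)).filter fun j => θ ≤ μ (gridCell K j) := fun d hd =>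
      Finset.mem_filter.2 ⟨Finset.mem_range.2 (Nat.lt_succ_of_le (hD d hd).1), (hD d hd).2⟩
    have := Finset.card_filter_add_card_filter_not (s := Finset.range (M + 1))
      (fun j => θ ≤ μ (gridCell K j))
    rw [Finset.card_range] at this
    linarith [Finset.card_le_card hDH]
  calc μ {v : ℝ | ∀ d ∈ D, 3 / K < |v - d / K|}
      ≤ μ (Icc 0 L)ᶜ + (∑ j ∈ light, μ (gridCell K j) + ∑ d ∈ D, μ (gridBand K d)) :=
        (measure_mono hcover).trans <| (measure_union_le _ _).trans <| add_le_add_right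
          ((measure_union_le _ _).trans
            (add_le_add (measure_biUnion_finset_le _ _) (measure_biUnion_finset_le _ _))) _
    _ ≤ 0 + (light.card • θ + D.card • θ) := by
        gcongr
        · exact hμL.le
        · exact Finset.sum_le_card_nsmul _ _ _ fun j hj => le_of_not_ge (Finset.mem_filter.1 hj).2
        · exact Finset.sum_le_card_nsmul _ _ _ fun d hd => measure_le_of_prod_subset hθ0 hθ
            (gridCell_prod_gridBand_subset hK d) (hD d hd).2 hmed
    _ ≤ (M + 1) * θ := by
        rw [zero_add, ← add_nsmul, nsmul_eq_mul]
        gcongr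
        exact_mod_cast hcard

lemma exists_separated_finset_near (μ : Measure ℝ) [SFinite μ] {L : ℝ} (hL : 0 ≤ L)
    (hμL : μ (Icc 0 L)ᶜ = 0) {K : ℕ} (hK : 0 < K) {θ : ENNReal} (hθ0 : θ ≠ 0) (hθ : θ ≠ ⊤)
    (hmed : μ.prod μ (mediumPairs (2 / K)) ≤ θ * θ) :
    ∃ D : Finset ℝ, (∀ d ∈ D, d ∈ Icc 0 L) ∧ (∀ d ∈ D, ∀ d' ∈ D, d = d' ∨ 1 ≤ |d - d'|) ∧
      μ {v | ∀ d ∈ D, 3 / K < |v - d|} ≤ (⌊L * K⌋₊ + 1) * θ := by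
  classical
  obtain ⟨D, hDH, hsep, hcov⟩ := exists_separated_subset_covering
    ((Finset.range (⌊L * K⌋₊ + 1)).filter fun j => θ ≤ μ (gridCell K j)) hK
  have hD : ∀ d ∈ D, d ≤ ⌊L * K⌋₊ ∧ θ ≤ μ (gridCell K d) := fun d hd => by
    obtain ⟨hdM, hdθ⟩ := Finset.mem_filter.1 (hDH hd)
    exact ⟨Nat.lt_succ_iff.1 (Finset.mem_range.1 hdM), hdθ⟩
  refine ⟨D.image fun j : ℕ => (j : ℝ) / K, ?_, ?_, ?_⟩
  · simp only [Finset.mem_image]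
    rintro _ ⟨j, hj, rfl⟩
    refine ⟨by positivity, (div_le_iff₀ (Nat.cast_pos.2 hK)).2 ?_⟩
    exact (Nat.cast_le.2 (hD j hj).1).trans (Nat.floor_le (by positivity))
  · simp only [Finset.mem_image]
    rintro _ ⟨j, hj, rfl⟩ _ ⟨j', hj', rfl⟩
    rcases lt_trichotomy j j' with h | rfl | h
    · exact Or.inr (one_le_abs_div_sub_div hK (hsep j hj j' hj' h))
    · exact Or.inl rfl
    · exact Or.inr ((one_le_abs_div_sub_div hK (hsep j' hj' j hj h)).trans_eq (abs_sub_comm _ _))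
  simp only [Finset.forall_mem_image]
  exact measure_far_from_grid_le μ hμL hK hθ0 hθ hmed hD fun j hjM hj =>
    hcov j (Finset.mem_filter.2 ⟨Finset.mem_range.2 (Nat.lt_succ_of_le hjM), hj⟩)

noncomputable def floorIn (D : Finset ℝ) (hD : D.Nonempty) (v : ℝ) : ℝ :=
  (insert (D.min' hD) (D.filter (· ≤ v))).max' (Finset.insert_nonempty _ _)

section FloorIn

variable {D : Finset ℝ} (hD : D.Nonempty)

lemma floorIn_mem (v : ℝ) : floorIn D hD v ∈ D := by
  rcases Finset.mem_insert.1 (Finset.max'_mem _ _ : floorIn D hD v ∈ _) with h | h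
  · rw [floorIn, h]; exact D.min'_mem hD
  · exact (Finset.mem_filter.1 h).1

lemma monotone_floorIn : Monotone (floorIn D hD) := fun _ _ hvw =>
  Finset.max'_subset _ (Finset.insert_subset_insert _ (Finset.monotone_filter_right _
    fun _ _ h => h.trans hvw))

lemma le_floorIn {d v : ℝ} (hd : d ∈ D) (hdv : d ≤ v) : d ≤ floorIn D hD v :=
  Finset.le_max' _ _ (Finset.mem_insert_of_mem (Finset.mem_filter.2 ⟨hd, hdv⟩))

lemma floorIn_le {d v : ℝ} (hd : d ∈ D) (hdv : d ≤ v) : floorIn D hD v ≤ v := by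
  refine Finset.max'_le _ _ _ fun e he => ?_
  rcases Finset.mem_insert.1 he with rfl | he
  · exact (D.min'_le d hd).trans hdv
  · exact (Finset.mem_filter.1 he).2

end FloorIn

lemma exists_mem_Fset_near {L : ℝ} (hL : 0 ≤ L) {D : Finset ℝ} (hDL : ∀ d ∈ D, d ∈ Icc 0 L)
    (hDsep : ∀ d ∈ D, ∀ d' ∈ D, d = d' ∨ 1 ≤ |d - d'|) {x : ℝ → ℝ} (hx : Measurable x) (r : ℝ) :
    ∃ s ∈ Fset L, ∀ α, ∀ d ∈ D, |x α - d| ≤ r → |x α - s α| ≤ r := by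
  rcases D.eq_empty_or_nonempty with rfl | hD
  · exact ⟨fun _ => 0, ⟨measurable_const, fun _ _ => ⟨le_rfl, hL⟩, fun _ _ _ _ => Or.inl rfl⟩,
      by simp⟩
  refine ⟨fun α => floorIn D hD (x α + r), ⟨(monotone_floorIn hD).measurable.comp (hx.add_const r),
    fun α _ => hDL _ (floorIn_mem hD _), fun α _ β _ => hDsep _ (floorIn_mem hD _) _
    (floorIn_mem hD _)⟩, fun α d hd hxd => ?_⟩
  obtain ⟨h₁, h₂⟩ := abs_le.1 hxd
  have := le_floorIn hD hd (v := x α + r) (by linarith)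
  have := floorIn_le hD hd (v := x α + r) (by linarith)
  exact abs_le.2 ⟨by linarith, by linarith⟩

lemma volume_sep_Icc (p : ℝ → Prop) : volume {α ∈ Icc (0 : ℝ) 1 | p α} = ν {α | p α} := by
  rw [Measure.restrict_apply' measurableSet_Icc, inter_comm, inter_ofPred_eq_sep]

lemma map_compl_Icc_eq_zero {x : ℝ → ℝ} {L : ℝ} (hx : Measurable x) (hxL : ∀ v, x v ∈ Icc 0 L) :
    Measure.map x ν (Icc 0 L)ᶜ = 0 := by
  rw [Measure.map_apply hx measurableSet_Icc.compl]
  convert measure_empty (μ := ν)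
  exact eq_empty_of_forall_notMem fun v hv => hv (hxL v)

theorem exists_near_Fset_of_lapFn_small {L : ℝ} (hL : 0 < L) {ε : ℝ} (hε : 0 < ε) :
    ∃ δ > 0, ∀ x : ℝ → ℝ, Measurable x → (∀ v, x v ∈ Icc 0 L) →
      volume {α ∈ Icc (0 : ℝ) 1 | δ ≤ |lapFn x α|} < ENNReal.ofReal δ →
      ∃ s ∈ Fset L, volume {α ∈ Icc (0 : ℝ) 1 | ε ≤ |x α - s α|} < ENNReal.ofReal ε := by
  obtain ⟨K, hK⟩ := exists_nat_gt (3 / ε)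
  have hK0 : 0 < K := by exact_mod_cast (by positivity : 0 < 3 / ε).trans hK
  set N : ℕ := ⌊L * K⌋₊ + 1
  have hN : (0 : ℝ) < N := by positivity
  set t := ε / (2 * N)
  have ht : 0 < t := by positivity
  set δ := t ^ 2 * (2 / K) ^ 2 / (4 * L)
  have hδ : 0 < δ := by positivity
  refine ⟨δ, hδ, fun x hx hxL hbad => ?_⟩
  set μ := Measure.map x ν
  have hlap := integral_abs_lapFn_le hx hxL hδ.le ((volume_sep_Icc _).symm.trans_le hbad.le)
  have hmed : μ.prod μ (mediumPairs (2 / K)) ≤ ENNReal.ofReal t * ENNReal.ofReal t := by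
    have h := (sq_mul_measureReal_mediumPairs_le (μ.prod μ) (a := 2 / K) (by positivity)).trans
      ((integral_energy_map_le hx hxL).trans (mul_le_mul_of_nonneg_left hlap (by positivity)))
    have h' : 2 * L * (2 * δ) = (2 / K) ^ 2 * t ^ 2 := by
      simp only [δ]; field_simp; ring
    rw [h'] at h
    rw [← ENNReal.ofReal_mul ht.le, ← ENNReal.ofReal_toReal (measure_ne_top _ _), ← sq]
    exact ENNReal.ofReal_le_ofReal (le_of_mul_le_mul_left h (by positivity))
  obtain ⟨D, hDL, hDsep, hDμ⟩ := exists_separated_finset_near μ hL.le (map_compl_Icc_eq_zero hx hxL)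
    hK0 (ENNReal.ofReal_pos.2 ht).ne' ENNReal.ofReal_ne_top hmed
  obtain ⟨s, hs, hsx⟩ := exists_mem_Fset_near hL.le hDL hDsep hx (3 / K)
  have h3K : 3 / (K : ℝ) < ε :=
    (div_lt_iff₀ (by positivity)).2 (by rwa [div_lt_iff₀ hε, mul_comm] at hK)
  refine ⟨s, hs, ?_⟩
  calc volume {α ∈ Icc (0 : ℝ) 1 | ε ≤ |x α - s α|}
      ≤ ν (x ⁻¹' {v | ∀ d ∈ D, 3 / K < |v - d|}) := by
        rw [volume_sep_Icc]
        exact measure_mono fun α hα d hd => lt_of_not_ge fun h => by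
          linarith [hsx α d hd h, show ε ≤ |x α - s α| from hα]
    _ ≤ μ {v | ∀ d ∈ D, 3 / K < |v - d|} := Measure.le_map_apply hx.aemeasurable _
    _ ≤ N * ENNReal.ofReal t := hDμ.trans_eq (by simp [N])
    _ = ENNReal.ofReal (ε / 2) := by
        rw [← ENNReal.ofReal_natCast, ← ENNReal.ofReal_mul (by positivity)]
        congr 1; simp only [t]; field_simp
    _ < ENNReal.ofReal ε := (ENNReal.ofReal_lt_ofReal_iff hε).2 (by linarith)

lemma mk_notMem_of_isOpen_of_prod_eq_zero {X Y : Type*} [TopologicalSpace X] [MeasurableSpace X]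
    [TopologicalSpace Y] [MeasurableSpace Y] {μ : Measure X} {μ' : Measure Y} [SFinite μ']
    {S : Set (X × Y)} (hS : IsOpen S) (h0 : μ.prod μ' S = 0) {u : X} {w : Y}
    (hu : u ∈ μ.support) (hw : w ∈ μ'.support) : (u, w) ∉ S := by
  intro huw
  obtain ⟨U, W, hU, hW, huU, hwW, hUW⟩ := isOpen_prod_iff.1 hS u w huw
  have hpos : 0 < μ.prod μ' (U ×ˢ W) := by
    rw [Measure.prod_prod]
    exact ENNReal.mul_pos ((Measure.mem_support_iff_forall u).1 hu U (hU.mem_nhds huU)).ne'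
      ((Measure.mem_support_iff_forall w).1 hw W (hW.mem_nhds hwW)).ne'
  exact hpos.ne' (measure_mono_null hUW h0)

lemma finite_of_subset_Icc_of_separated {S : Set ℝ} {L : ℝ} (hSL : S ⊆ Icc 0 L)
    (hsep : ∀ u ∈ S, ∀ w ∈ S, |u - w| < 1 → u = w) : S.Finite := by
  refine Set.Finite.of_finite_image (f := fun v : ℝ => ⌊v⌋₊) ((Set.finite_Iic ⌊L⌋₊).subset ?_)
    fun u hu w hw huw => ?_
  · rintro _ ⟨v, hv, rfl⟩
    exact Nat.floor_le_floor (hSL hv).2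
  · have h₁ := Nat.floor_le (hSL hu).1
    have h₂ := Nat.lt_floor_add_one u
    have h₃ := Nat.floor_le (hSL hw).1
    have h₄ := Nat.lt_floor_add_one w
    have huw' : (⌊u⌋₊ : ℝ) = ⌊w⌋₊ := congrArg Nat.cast huw
    exact hsep u hu w hw (abs_lt.2 ⟨by linarith, by linarith⟩)

theorem exists_ae_eq_Fset_of_lapFn_ae_eq_zero {L : ℝ} (hL : 0 ≤ L) {x : ℝ → ℝ}
    (hx : Measurable x) (hxL : ∀ v, x v ∈ Icc 0 L) (hlap : ∀ᵐ α ∂ν, lapFn x α = 0) :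
    ∃ s ∈ Fset L, ∀ᵐ α ∂ν, x α = s α := by
  set μ := Measure.map x ν
  have hE : ∫ p, energy (p.1 - p.2) ∂(μ.prod μ) = 0 := by
    refine le_antisymm ((integral_energy_map_le hx hxL).trans_eq ?_)
      (integral_nonneg fun _ => energy_nonneg _)
    rw [integral_eq_zero_of_ae (hlap.mono fun α h => by simp [h]), mul_zero]
  have hclose : IsOpen {p : ℝ × ℝ | 0 < |p.1 - p.2| ∧ |p.1 - p.2| < 1} :=
    have hc : Continuous fun p : ℝ × ℝ => |p.1 - p.2| := (continuous_fst.sub continuous_snd).abs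
    (isOpen_lt continuous_const hc).inter (isOpen_lt hc continuous_const)
  have hsep : ∀ u ∈ μ.support, ∀ w ∈ μ.support, |u - w| < 1 → u = w := fun u hu w hw huw =>
    by_contra fun hne => mk_notMem_of_isOpen_of_prod_eq_zero hclose
      (measure_closePairs_eq_zero _ hE) hu hw ⟨abs_pos.2 (sub_ne_zero.2 hne), huw⟩
  have hsupp : μ.support ⊆ Icc 0 L :=
    Measure.support_subset_of_isClosed isClosed_Icc (mem_ae_iff.2 (map_compl_Icc_eq_zero hx hxL))
  have hfin := finite_of_subset_Icc_of_separated hsupp hsep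
  obtain ⟨s, hs, hsx⟩ := exists_mem_Fset_near hL (D := hfin.toFinset)
    (fun d hd => hsupp (hfin.mem_toFinset.1 hd))
    (fun d hd d' hd' => or_iff_not_imp_right.2 fun h =>
      hsep d (hfin.mem_toFinset.1 hd) d' (hfin.mem_toFinset.1 hd') (not_le.1 h)) hx 0
  refine ⟨s, hs, (ae_of_ae_map hx.aemeasurable Measure.support_mem_ae).mono fun α hα => ?_⟩
  have := hsx α (x α) (hfin.mem_toFinset.2 hα) (by simp)
  exact sub_eq_zero.1 (abs_nonpos_iff.1 this)

lemma exists_measurable_eqOn_Icc {L : ℝ} (hL : 0 ≤ L) {x : ℝ → ℝ} (hx : Measurable x)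
    (hxL : ∀ α ∈ Icc (0 : ℝ) 1, x α ∈ Icc 0 L) :
    ∃ y : ℝ → ℝ, Measurable y ∧ (∀ v, y v ∈ Icc 0 L) ∧ EqOn x y (Icc 0 1) :=
  ⟨fun v => projIcc 0 L hL (x v),
    continuous_subtype_val.measurable.comp (continuous_projIcc.measurable.comp hx),
    fun v => (projIcc 0 L hL (x v)).2, fun α hα => by simp [projIcc_of_mem _ (hxL α hα)]⟩

lemma lapFn_eqOn_Icc {x y : ℝ → ℝ} (h : EqOn x y (Icc 0 1)) :
    EqOn (lapFn x) (lapFn y) (Icc 0 1) := by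
  intro α hα
  have hχ : EqOn (chiFn x α) (chiFn y α) (Icc 0 1) := fun β hβ => by
    simp only [chiFn, h hα, h hβ]
  simp only [lapFn, h hα]
  rw [setIntegral_congr_fun measurableSet_Icc hχ, setIntegral_congr_fun measurableSet_Icc
    fun β hβ => (congrArg₂ (· * ·) (hχ hβ) (h hβ) : chiFn x α β * x β = chiFn y α β * y β)]

/-- For every `ε > 0` there is `δ > 0` such that any
`x ∈ X_L` with `|L_x x| <_μ δ` is within `<_μ ε` of some `s ∈ F`; in
particular, if `L_x x = 0` a.e. then `x` agrees a.e. with an element of `F`. -/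
theorem lap_small_implies_near_F (L : ℝ) (hL : 0 < L) :
    (∀ ε > (0 : ℝ), ∃ δ > (0 : ℝ), ∀ x : ℝ → ℝ, Measurable x →
      (∀ α ∈ Set.Icc (0 : ℝ) 1, x α ∈ Set.Icc (0 : ℝ) L) →
      volume {α ∈ Set.Icc (0 : ℝ) 1 | δ ≤ |lapFn x α|} < ENNReal.ofReal δ →
      ∃ s ∈ Fset L,
        volume {α ∈ Set.Icc (0 : ℝ) 1 | ε ≤ |x α - s α|} < ENNReal.ofReal ε) ∧
    (∀ x : ℝ → ℝ, Measurable x →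
      (∀ α ∈ Set.Icc (0 : ℝ) 1, x α ∈ Set.Icc (0 : ℝ) L) →
      (∀ᵐ α ∂(volume.restrict (Set.Icc (0 : ℝ) 1)), lapFn x α = 0) →
      ∃ s ∈ Fset L,
        ∀ᵐ α ∂(volume.restrict (Set.Icc (0 : ℝ) 1)), x α = s α) := by
  refine ⟨fun ε hε => ?_, fun x hx hxL hlap => ?_⟩
  · obtain ⟨δ, hδ, hnear⟩ := exists_near_Fset_of_lapFn_small hL hε
    refine ⟨δ, hδ, fun x hx hxL hbad => ?_⟩
    obtain ⟨y, hy, hyL, hxy⟩ := exists_measurable_eqOn_Icc hL.le hx hxL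
    obtain ⟨s, hs, hys⟩ := hnear y hy hyL <| by
      rwa [Set.sep_ext_iff.2 fun α hα => by rw [lapFn_eqOn_Icc hxy hα]] at hbad
    exact ⟨s, hs, by rwa [Set.sep_ext_iff.2 fun α hα => by rw [hxy hα]]⟩
  · obtain ⟨y, hy, hyL, hxy⟩ := exists_measurable_eqOn_Icc hL.le hx hxL
    have hIcc : ∀ᵐ α ∂ν, α ∈ Icc 0 1 := ae_restrict_mem measurableSet_Icc
    obtain ⟨s, hs, hys⟩ := exists_ae_eq_Fset_of_lapFn_ae_eq_zero hL.le hy hyL <| by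
      filter_upwards [hlap, hIcc] with α h hα
      rwa [← lapFn_eqOn_Icc hxy hα]
    refine ⟨s, hs, ?_⟩
    filter_upwards [hys, hIcc] with α h hα
    rw [hxy hα, h]
end
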